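/- arXiv:1706.05745 — 12 statements merged into one kernel-verified Lean document; each statement's English description precedes it below -/
import Mathlib

section
/- Let μ be a σ-finite measure on a measurable space 𝒳, let f and δ be densities with respect to μ, let h : 𝒳 → [0,∞) be measurable, let α > 0, λ ∈ [0,1) with λ̄ = 1−λ, and ε ∈ [0,1). Assume ∫ h^{1+α}, ∫ f h^α and ∫ δ h^α are finite and that B := λ + λ̄ ∫ f h^α > 0. Set g = (1−ε)f + εδ and A := λ + λ̄ ∫ δ h^α. Then the exact expansion d_{λ,α}(g,h) = d_{λ,α}(f,h) − (1/(αλ̄)) log(1−ε) − (1/(αλ̄)) log(1 + (ε/(1−ε)) · A/B) holds. -/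
open MeasureTheory Real

/-- Exact expansion of the bridge cross entropy
`d_{λ,α}(g,h) = (1/(λ̄(1+α))) log(λ + λ̄ ∫ h^{1+α}) − (1/(αλ̄)) log(λ + λ̄ ∫ g h^α)`
under contamination `g = (1−ε) f + ε δ`. -/
theorem bridge_cross_entropy_contamination_expansion
    {𝒳 : Type*} [MeasurableSpace 𝒳] (μ : Measure 𝒳) [SigmaFinite μ]
    (f δ h : 𝒳 → ℝ) (α lam ε : ℝ) (hα : 0 < α)
    (hlam0 : 0 ≤ lam) (hlam1 : lam < 1) (hε0 : 0 ≤ ε) (hε1 : ε < 1)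
    (hf_nonneg : ∀ x, 0 ≤ f x) (hδ_nonneg : ∀ x, 0 ≤ δ x) (hh_nonneg : ∀ x, 0 ≤ h x)
    (hf_meas : Measurable f) (hδ_meas : Measurable δ) (hh_meas : Measurable h)
    (hf_dens : ∫ x, f x ∂μ = 1) (hδ_dens : ∫ x, δ x ∂μ = 1)
    (h_int_h : Integrable (fun x => h x ^ (1 + α)) μ)
    (h_int_f : Integrable (fun x => f x * h x ^ α) μ)
    (h_int_δ : Integrable (fun x => δ x * h x ^ α) μ)
    (hB : 0 < lam + (1 - lam) * ∫ x, f x * h x ^ α ∂μ) :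
    (1 / ((1 - lam) * (1 + α))) * Real.log (lam + (1 - lam) * ∫ x, h x ^ (1 + α) ∂μ)
      - (1 / (α * (1 - lam))) *
          Real.log (lam + (1 - lam) * ∫ x, ((1 - ε) * f x + ε * δ x) * h x ^ α ∂μ)
    = ((1 / ((1 - lam) * (1 + α))) * Real.log (lam + (1 - lam) * ∫ x, h x ^ (1 + α) ∂μ)
        - (1 / (α * (1 - lam))) * Real.log (lam + (1 - lam) * ∫ x, f x * h x ^ α ∂μ))
      - (1 / (α * (1 - lam))) * Real.log (1 - ε)
      - (1 / (α * (1 - lam))) *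
          Real.log (1 + (ε / (1 - ε)) *
            ((lam + (1 - lam) * ∫ x, δ x * h x ^ α ∂μ) /
              (lam + (1 - lam) * ∫ x, f x * h x ^ α ∂μ))) := by

  have hε' : (0:ℝ) < 1 - ε := by linarith
  set F := ∫ x, f x * h x ^ α ∂μ with hF
  set D := ∫ x, δ x * h x ^ α ∂μ with hD
  have hDnn : 0 ≤ D := integral_nonneg fun x =>
    mul_nonneg (hδ_nonneg x) (Real.rpow_nonneg (hh_nonneg x) α)
  have hA : 0 ≤ lam + (1 - lam) * D :=
    add_nonneg hlam0 (mul_nonneg (by linarith) hDnn)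
  have hint : (∫ x, ((1 - ε) * f x + ε * δ x) * h x ^ α ∂μ) = (1 - ε) * F + ε * D := by
    simp_rw [add_mul, mul_assoc]
    rw [integral_add (h_int_f.const_mul _) (h_int_δ.const_mul _),
      MeasureTheory.integral_const_mul, MeasureTheory.integral_const_mul]
  rw [hint]
  have hkey : lam + (1 - lam) * ((1 - ε) * F + ε * D)
      = (1 - ε) * ((lam + (1 - lam) * F) *
        (1 + (ε / (1 - ε)) * ((lam + (1 - lam) * D) / (lam + (1 - lam) * F)))) := by
    field_simp
    ring
  have hpos2 : 0 < 1 + (ε / (1 - ε)) * ((lam + (1 - lam) * D) / (lam + (1 - lam) * F)) := by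
    have : 0 ≤ (ε / (1 - ε)) * ((lam + (1 - lam) * D) / (lam + (1 - lam) * F)) :=
      mul_nonneg (div_nonneg hε0 hε'.le) (div_nonneg hA hB.le)
    linarith
  rw [hkey, Real.log_mul hε'.ne' (mul_pos hB hpos2).ne',
    Real.log_mul hB.ne' hpos2.ne']
  ring
end

section
/- Let μ be a σ-finite measure on a measurable space 𝒳, let f and δ be densities with respect to μ, let h : 𝒳 → [0,∞) be measurable, let α > 0, λ ∈ [0,1) with λ̄ = 1−λ, and ε ∈ [0,1). Assume ∫ h^{1+α}, ∫ f h^α and ∫ δ h^α are finite and that B := λ + λ̄ ∫ f h^α > 0. Set g = (1−ε)f + εδ and A := λ + λ̄ ∫ δ h^α. Then 0 ≤ d_{λ,α}(f,h) − (1/(αλ̄)) log(1−ε) − d_{λ,α}(g,h) ≤ T_{ε,δ}, where T_{ε,δ} := (ε/(1−ε)) · A / (αλ̄B). In particular d_{λ,α}(g,h) = d_{λ,α}(f,h) − (1/(αλ̄)) log(1−ε) + O(T_{ε,δ}). -/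
open MeasureTheory Real

/-- Two-sided bound on the bridge cross entropy expansion under
contamination `g = (1−ε) f + ε δ`:
`0 ≤ d_{λ,α}(f,h) − (1/(αλ̄)) log(1−ε) − d_{λ,α}(g,h) ≤ T_{ε,δ}` where
`T_{ε,δ} = (ε/(1−ε)) A / (αλ̄ B)`, `A = λ + λ̄ ∫ δ h^α`, `B = λ + λ̄ ∫ f h^α`. -/
theorem bridge_cross_entropy_contamination_bound
    {𝒳 : Type*} [MeasurableSpace 𝒳] (μ : Measure 𝒳) [SigmaFinite μ]
    (f δ h : 𝒳 → ℝ) (α lam ε : ℝ) (hα : 0 < α)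
    (hlam0 : 0 ≤ lam) (hlam1 : lam < 1) (hε0 : 0 ≤ ε) (hε1 : ε < 1)
    (hf_nonneg : ∀ x, 0 ≤ f x) (hδ_nonneg : ∀ x, 0 ≤ δ x) (hh_nonneg : ∀ x, 0 ≤ h x)
    (hf_meas : Measurable f) (hδ_meas : Measurable δ) (hh_meas : Measurable h)
    (hf_dens : ∫ x, f x ∂μ = 1) (hδ_dens : ∫ x, δ x ∂μ = 1)
    (h_int_h : Integrable (fun x => h x ^ (1 + α)) μ)
    (h_int_f : Integrable (fun x => f x * h x ^ α) μ)
    (h_int_δ : Integrable (fun x => δ x * h x ^ α) μ)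
    (hB : 0 < lam + (1 - lam) * ∫ x, f x * h x ^ α ∂μ) :
    0 ≤ ((1 / ((1 - lam) * (1 + α))) * Real.log (lam + (1 - lam) * ∫ x, h x ^ (1 + α) ∂μ)
          - (1 / (α * (1 - lam))) * Real.log (lam + (1 - lam) * ∫ x, f x * h x ^ α ∂μ))
        - (1 / (α * (1 - lam))) * Real.log (1 - ε)
        - ((1 / ((1 - lam) * (1 + α))) * Real.log (lam + (1 - lam) * ∫ x, h x ^ (1 + α) ∂μ)
            - (1 / (α * (1 - lam))) *
                Real.log (lam + (1 - lam) * ∫ x, ((1 - ε) * f x + ε * δ x) * h x ^ α ∂μ))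
    ∧ ((1 / ((1 - lam) * (1 + α))) * Real.log (lam + (1 - lam) * ∫ x, h x ^ (1 + α) ∂μ)
          - (1 / (α * (1 - lam))) * Real.log (lam + (1 - lam) * ∫ x, f x * h x ^ α ∂μ))
        - (1 / (α * (1 - lam))) * Real.log (1 - ε)
        - ((1 / ((1 - lam) * (1 + α))) * Real.log (lam + (1 - lam) * ∫ x, h x ^ (1 + α) ∂μ)
            - (1 / (α * (1 - lam))) *
                Real.log (lam + (1 - lam) * ∫ x, ((1 - ε) * f x + ε * δ x) * h x ^ α ∂μ))
      ≤ (ε / (1 - ε)) * (lam + (1 - lam) * ∫ x, δ x * h x ^ α ∂μ) /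
          (α * (1 - lam) * (lam + (1 - lam) * ∫ x, f x * h x ^ α ∂μ)) := by

  have hε1' : (0:ℝ) < 1 - ε := by linarith
  have hlam1' : (0:ℝ) < 1 - lam := by linarith
  set IF := ∫ x, f x * h x ^ α ∂μ with hIF
  set ID := ∫ x, δ x * h x ^ α ∂μ with hID
  have hID0 : 0 ≤ ID := integral_nonneg fun x =>
    mul_nonneg (hδ_nonneg x) (Real.rpow_nonneg (hh_nonneg x) α)
  have hG : ∫ x, ((1 - ε) * f x + ε * δ x) * h x ^ α ∂μ = (1 - ε) * IF + ε * ID := by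
    rw [hIF, hID, ← integral_const_mul, ← integral_const_mul,
      ← integral_add (h_int_f.const_mul _) (h_int_δ.const_mul _)]
    congr 1; funext x; ring
  rw [hG]
  set B := lam + (1 - lam) * IF with hBdef
  set A := lam + (1 - lam) * ID with hAdef
  have hA0 : 0 ≤ A := by rw [hAdef]; nlinarith
  have hkey : lam + (1 - lam) * ((1 - ε) * IF + ε * ID) = (1 - ε) * B + ε * A := by
    rw [hBdef, hAdef]; ring
  rw [hkey]
  have hY : 0 < (1 - ε) * B := mul_pos hε1' hB
  have hX : 0 < (1 - ε) * B + ε * A := by nlinarith [mul_nonneg hε0 hA0]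
  have hc : 0 < α * (1 - lam) := mul_pos hα hlam1'
  have hlogY : Real.log ((1 - ε) * B) = Real.log (1 - ε) + Real.log B :=
    Real.log_mul (ne_of_gt hε1') (ne_of_gt hB)
  constructor
  · have hmono : Real.log ((1 - ε) * B) ≤ Real.log ((1 - ε) * B + ε * A) :=
      Real.log_le_log hY (by nlinarith [mul_nonneg hε0 hA0])
    rw [hlogY] at hmono
    have : 0 < (1:ℝ) / (α * (1 - lam)) := by positivity
    nlinarith
  · have hdiv : Real.log (((1 - ε) * B + ε * A) / ((1 - ε) * B)) ≤
        ((1 - ε) * B + ε * A) / ((1 - ε) * B) - 1 :=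
      Real.log_le_sub_one_of_pos (by positivity)
    rw [Real.log_div (ne_of_gt hX) (ne_of_gt hY), hlogY] at hdiv
    have heq : ((1 - ε) * B + ε * A) / ((1 - ε) * B) - 1 = ε * A / ((1 - ε) * B) := by
      field_simp
      ring
    rw [heq] at hdiv
    have hrhs : (ε / (1 - ε)) * A / (α * (1 - lam) * B)
        = (1 / (α * (1 - lam))) * (ε * A / ((1 - ε) * B)) := by
      field_simp
    rw [hrhs]
    have hcinv : 0 < (1:ℝ) / (α * (1 - lam)) := by positivity
    nlinarith
end

section
/- Let μ be a σ-finite measure on a measurable space 𝒳, let f and δ be densities with respect to μ, let h : 𝒳 → [0,∞) be measurable, let α > 0, λ ∈ [0,1) with λ̄ = 1−λ, and ε ∈ [0,1). Assume ∫ h^{1+α}, ∫ f^{1+α}, ∫ f h^α, ∫ δ h^α and ∫ δ f^α are all finite, and that B_h := λ + λ̄ ∫ f h^α > 0 and B_f := λ + λ̄ ∫ f^{1+α} > 0. Set g = (1−ε)f + εδ, A_h := λ + λ̄ ∫ δ h^α and A_f := λ + λ̄ ∫ δ f^α. Then the Pythagorean defect satisfies the exact identity d_{λ,α}(g,h) −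 d_{λ,α}(g,f) − d_{λ,α}(f,h) + d_{λ,α}(f,f) = (1/(αλ̄)) [ log(1 + (ε/(1−ε)) A_f/B_f) − log(1 + (ε/(1−ε)) A_h/B_h) ]. -/
open MeasureTheory Real

lemma log_mix_aux {A B ε : ℝ} (hB : 0 < B) (hA : 0 ≤ A) (hε0 : 0 ≤ ε) (hε1 : ε < 1) :
    Real.log ((1 - ε) * B + ε * A)
      = Real.log (1 - ε) + Real.log B + Real.log (1 + (ε / (1 - ε)) * (A / B)) := by
  have hε' : (0:ℝ) < 1 - ε := by linarith
  have h1 : (0:ℝ) < 1 + (ε / (1 - ε)) * (A / B) := by positivity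
  have key : (1 - ε) * B + ε * A = (1 - ε) * B * (1 + (ε / (1 - ε)) * (A / B)) := by
    field_simp
  rw [key, Real.log_mul (by positivity) (ne_of_gt h1), Real.log_mul hε'.ne' hB.ne']

/-- Exact identity for the Pythagorean defect of the bridge cross
entropy `d_{λ,α}` under contamination `g = (1−ε) f + ε δ`:
`d(g,h) − d(g,f) − d(f,h) + d(f,f)
  = (1/(αλ̄)) [ log(1 + (ε/(1−ε)) A_f/B_f) − log(1 + (ε/(1−ε)) A_h/B_h) ]`. -/
theorem bridge_pythagorean_defect_identity
    {𝒳 : Type*} [MeasurableSpace 𝒳] (μ : Measure 𝒳) [SigmaFinite μ]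
    (f δ h : 𝒳 → ℝ) (α lam ε : ℝ) (hα : 0 < α)
    (hlam0 : 0 ≤ lam) (hlam1 : lam < 1) (hε0 : 0 ≤ ε) (hε1 : ε < 1)
    (hf_nonneg : ∀ x, 0 ≤ f x) (hδ_nonneg : ∀ x, 0 ≤ δ x) (hh_nonneg : ∀ x, 0 ≤ h x)
    (hf_meas : Measurable f) (hδ_meas : Measurable δ) (hh_meas : Measurable h)
    (hf_dens : ∫ x, f x ∂μ = 1) (hδ_dens : ∫ x, δ x ∂μ = 1)
    (h_int_h : Integrable (fun x => h x ^ (1 + α)) μ)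
    (h_int_f1α : Integrable (fun x => f x ^ (1 + α)) μ)
    (h_int_fh : Integrable (fun x => f x * h x ^ α) μ)
    (h_int_δh : Integrable (fun x => δ x * h x ^ α) μ)
    (h_int_δf : Integrable (fun x => δ x * f x ^ α) μ)
    (hBh : 0 < lam + (1 - lam) * ∫ x, f x * h x ^ α ∂μ)
    (hBf : 0 < lam + (1 - lam) * ∫ x, f x ^ (1 + α) ∂μ) :
    -- d_{λ,α}(g,h)
    (((1 / ((1 - lam) * (1 + α))) * Real.log (lam + (1 - lam) * ∫ x, h x ^ (1 + α) ∂μ)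
        - (1 / (α * (1 - lam))) *
            Real.log (lam + (1 - lam) * ∫ x, ((1 - ε) * f x + ε * δ x) * h x ^ α ∂μ))
      -- − d_{λ,α}(g,f)
      - ((1 / ((1 - lam) * (1 + α))) * Real.log (lam + (1 - lam) * ∫ x, f x ^ (1 + α) ∂μ)
          - (1 / (α * (1 - lam))) *
              Real.log (lam + (1 - lam) * ∫ x, ((1 - ε) * f x + ε * δ x) * f x ^ α ∂μ))
      -- − d_{λ,α}(f,h)
      - ((1 / ((1 - lam) * (1 + α))) * Real.log (lam + (1 - lam) * ∫ x, h x ^ (1 + α) ∂μ)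
          - (1 / (α * (1 - lam))) * Real.log (lam + (1 - lam) * ∫ x, f x * h x ^ α ∂μ))
      -- + d_{λ,α}(f,f)
      + ((1 / ((1 - lam) * (1 + α))) * Real.log (lam + (1 - lam) * ∫ x, f x ^ (1 + α) ∂μ)
          - (1 / (α * (1 - lam))) * Real.log (lam + (1 - lam) * ∫ x, f x * f x ^ α ∂μ)))
    = (1 / (α * (1 - lam))) *
        (Real.log (1 + (ε / (1 - ε)) *
            ((lam + (1 - lam) * ∫ x, δ x * f x ^ α ∂μ) /
              (lam + (1 - lam) * ∫ x, f x ^ (1 + α) ∂μ)))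
          - Real.log (1 + (ε / (1 - ε)) *
              ((lam + (1 - lam) * ∫ x, δ x * h x ^ α ∂μ) /
                (lam + (1 - lam) * ∫ x, f x * h x ^ α ∂μ)))) := by
  have hε' : (0:ℝ) < 1 - ε := by linarith
  have hlam' : (0:ℝ) < 1 - lam := by linarith
  have hff : (fun x => f x * f x ^ α) = fun x => f x ^ (1 + α) := by
    funext x
    rcases eq_or_lt_of_le (hf_nonneg x) with h0 | h0
    · rw [← h0, Real.zero_rpow (by linarith : (1:ℝ) + α ≠ 0), Real.zero_rpow hα.ne',
        mul_zero]
    · rw [Real.rpow_add h0, Real.rpow_one]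
  have h_int_ff : Integrable (fun x => f x * f x ^ α) μ := by rw [hff]; exact h_int_f1α
  have int_gh : ∫ x, ((1 - ε) * f x + ε * δ x) * h x ^ α ∂μ
      = (1 - ε) * ∫ x, f x * h x ^ α ∂μ + ε * ∫ x, δ x * h x ^ α ∂μ := by
    rw [← MeasureTheory.integral_const_mul, ← MeasureTheory.integral_const_mul,
      ← integral_add (h_int_fh.const_mul _) (h_int_δh.const_mul _)]
    congr 1; funext x; ring
  have int_gf : ∫ x, ((1 - ε) * f x + ε * δ x) * f x ^ α ∂μ
      = (1 - ε) * ∫ x, f x * f x ^ α ∂μ + ε * ∫ x, δ x * f x ^ α ∂μ := by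
    rw [← MeasureTheory.integral_const_mul, ← MeasureTheory.integral_const_mul,
      ← integral_add (h_int_ff.const_mul _) (h_int_δf.const_mul _)]
    congr 1; funext x; ring
  have hffint : ∫ x, f x * f x ^ α ∂μ = ∫ x, f x ^ (1 + α) ∂μ := by rw [hff]
  rw [int_gh, int_gf, hffint]
  set Ih := ∫ x, f x * h x ^ α ∂μ
  set Jh := ∫ x, δ x * h x ^ α ∂μ
  set If := ∫ x, f x ^ (1 + α) ∂μ
  set Jf := ∫ x, δ x * f x ^ α ∂μ
  have hJh : 0 ≤ Jh := integral_nonneg fun x =>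
    mul_nonneg (hδ_nonneg x) (Real.rpow_nonneg (hh_nonneg x) _)
  have hJf : 0 ≤ Jf := integral_nonneg fun x =>
    mul_nonneg (hδ_nonneg x) (Real.rpow_nonneg (hf_nonneg x) _)
  have hAh : 0 ≤ lam + (1 - lam) * Jh := by positivity
  have hAf : 0 ≤ lam + (1 - lam) * Jf := by positivity
  have e1 : lam + (1 - lam) * ((1 - ε) * Ih + ε * Jh)
      = (1 - ε) * (lam + (1 - lam) * Ih) + ε * (lam + (1 - lam) * Jh) := by ring
  have e2 : lam + (1 - lam) * ((1 - ε) * If + ε * Jf)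
      = (1 - ε) * (lam + (1 - lam) * If) + ε * (lam + (1 - lam) * Jf) := by ring
  rw [e1, e2, log_mix_aux hBh hAh hε0 hε1, log_mix_aux hBf hAf hε0 hε1]
  ring
end

section
/- Let f : ℝ → [0,∞) be a measurable probability density with respect to Lebesgue measure with f(0) > 0 and 0 < ∫_ℝ f(x)^{1+α} dx < ∞, let α > 0, λ ∈ [0,1) with λ̄ = 1−λ, and let X_1, …, X_n ∈ ℝ be arbitrary points (n ≥ 1). Then the sample bridge divergence objective over the location-scale family is unbounded below: for every M ∈ ℝ there exists θ = (μ,σ) ∈ ℝ × (0,∞) such that λ + (λ̄/n) Σ_{i=1}^n f_θ(X_i)^α > 0 and log(λ + λ̄ ∫_ℝ f_θ(x)^{1+α} dx) − ((1+α)/α) log(λ + (λ̄/n) Σ_{i=1}^n f_θ(X_i)^α) < M. -/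
open MeasureTheory Real Filter Topology

/-- The sample bridge divergence objective over the location-scale
family is unbounded below (for `α > 0`, `λ ∈ [0,1)`). -/
theorem bridge_objective_unbounded_below_location_scale
    (f : ℝ → ℝ) (hf_nonneg : ∀ x, 0 ≤ f x) (hf_meas : Measurable f)
    (hf_dens : ∫ x, f x = 1) (hf0 : 0 < f 0)
    (α lam : ℝ) (hα : 0 < α) (hlam0 : 0 ≤ lam) (hlam1 : lam < 1)
    (hI_pos : 0 < ∫ x, f x ^ (1 + α))
    (hI_fin : Integrable (fun x => f x ^ (1 + α)))
    (n : ℕ) (hn : 1 ≤ n) (X : Fin n → ℝ) :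
    ∀ M : ℝ, ∃ μ₀ σ : ℝ, 0 < σ ∧
      0 < lam + (1 - lam) / (n : ℝ) * ∑ i, ((1 / σ) * f ((X i - μ₀) / σ)) ^ α ∧
      Real.log (lam + (1 - lam) * ∫ x, ((1 / σ) * f ((x - μ₀) / σ)) ^ (1 + α))
        - ((1 + α) / α) *
            Real.log (lam + (1 - lam) / (n : ℝ) * ∑ i, ((1 / σ) * f ((X i - μ₀) / σ)) ^ α)
      < M := by
  intro M
  have hlb : 0 < 1 - lam := by linarith
  have hn0 : (0:ℝ) < n := by exact_mod_cast hn
  set I : ℝ := ∫ x, f x ^ (1 + α) with hI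
  have hf0α : 0 < f 0 ^ α := Real.rpow_pos_of_pos hf0 α
  set c : ℝ := (1 - lam) / n * f 0 ^ α with hc
  have hc0 : 0 < c := by positivity
  set C : ℝ := Real.log (lam + (1 - lam) * I) - ((1 + α) / α) * Real.log c with hC
  set r : ℝ := max 0 (C - M + 1) with hr
  have hr0 : 0 ≤ r := le_max_left _ _
  have hrCM : C - M + 1 ≤ r := le_max_right _ _
  set σ : ℝ := Real.exp (-r) with hσdef
  have hσ : 0 < σ := Real.exp_pos _
  set t : ℝ := Real.exp (α * r) with ht
  have ht0 : 0 < t := Real.exp_pos _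
  have ht1 : 1 ≤ t := Real.one_le_exp (by positivity)
  have hσt : ∀ p : ℝ, (1 / σ) ^ p = Real.exp (r * p) := by
    intro p
    rw [hσdef, one_div, ← Real.exp_neg, neg_neg, ← Real.exp_mul]
  set i0 : Fin n := ⟨0, hn⟩ with hi0
  set μ₀ : ℝ := X i0 with hμ₀
  refine ⟨μ₀, σ, hσ, ?_, ?_⟩
  case _ =>
    have : (0:ℝ) < ∑ i, ((1 / σ) * f ((X i - μ₀) / σ)) ^ α := by
      apply Finset.sum_pos'
        (fun i _ => Real.rpow_nonneg (mul_nonneg (le_of_lt (one_div_pos.mpr hσ)) (hf_nonneg _)) α)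
      refine ⟨i0, Finset.mem_univ _, ?_⟩
      have : (X i0 - μ₀) / σ = 0 := by rw [hμ₀, sub_self, zero_div]
      rw [this]
      exact Real.rpow_pos_of_pos (mul_pos (one_div_pos.mpr hσ) hf0) α
    positivity
  -- the main inequality
  have hterm : ((1 / σ) * f ((X i0 - μ₀) / σ)) ^ α = t * f 0 ^ α := by
    have hz : (X i0 - μ₀) / σ = 0 := by rw [hμ₀, sub_self, zero_div]
    rw [hz, Real.mul_rpow (le_of_lt (one_div_pos.mpr hσ)) (hf_nonneg 0), hσt α, ht, mul_comm r α]
  have hsum : t * f 0 ^ α ≤ ∑ i, ((1 / σ) * f ((X i - μ₀) / σ)) ^ α := by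
    rw [← hterm]
    exact Finset.single_le_sum (f := fun i => (1 / σ * f ((X i - μ₀) / σ)) ^ α)
      (fun i _ => Real.rpow_nonneg (mul_nonneg (le_of_lt (one_div_pos.mpr hσ)) (hf_nonneg _)) α)
      (Finset.mem_univ i0)
  set S : ℝ := lam + (1 - lam) / n * ∑ i, ((1 / σ) * f ((X i - μ₀) / σ)) ^ α with hS
  have hctS : c * t ≤ S := by
    have h1 : (1 - lam) / n * (t * f 0 ^ α) ≤ (1 - lam) / n * ∑ i, ((1 / σ) * f ((X i - μ₀) / σ)) ^ α :=
      mul_le_mul_of_nonneg_left hsum (by positivity)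
    have h2 : c * t = (1 - lam) / n * (t * f 0 ^ α) := by rw [hc]; ring
    rw [hS]
    linarith
  have hct0 : 0 < c * t := by positivity
  have hS0 : 0 < S := lt_of_lt_of_le hct0 hctS
  -- integral computation
  have key : (∫ x, ((1 / σ) * f ((x - μ₀) / σ)) ^ (1 + α)) = t * I := by
    have h1 : ∀ x : ℝ, ((1 / σ) * f ((x - μ₀) / σ)) ^ (1 + α)
        = (1 / σ) ^ (1 + α) * (f ((x - μ₀) / σ)) ^ (1 + α) :=
      fun x => Real.mul_rpow (le_of_lt (one_div_pos.mpr hσ)) (hf_nonneg _)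
    simp_rw [h1]
    rw [integral_const_mul]
    have h2 : (∫ x, f ((x - μ₀) / σ) ^ (1 + α)) = ∫ x, f (x / σ) ^ (1 + α) :=
      integral_sub_right_eq_self (fun x => f (x / σ) ^ (1 + α)) μ₀
    rw [h2, Measure.integral_comp_div (fun y => f y ^ (1 + α)) σ, smul_eq_mul,
      abs_of_pos hσ, hσt (1 + α), hσdef, ht, ← hI, ← mul_assoc, ← Real.exp_add]
    have : r * (1 + α) + -r = α * r := by ring
    rw [this]
  rw [key]
  -- bound the first log
  have hlogt : Real.log t = α * r := by rw [ht, Real.log_exp]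
  have hA : Real.log (lam + (1 - lam) * (t * I)) ≤ Real.log (lam + (1 - lam) * I) + α * r := by
    have hpos : 0 < lam + (1 - lam) * I := by positivity
    have hle : lam + (1 - lam) * (t * I) ≤ (lam + (1 - lam) * I) * t := by
      nlinarith [mul_nonneg hlam0 (sub_nonneg.mpr ht1)]
    calc Real.log (lam + (1 - lam) * (t * I)) ≤ Real.log ((lam + (1 - lam) * I) * t) :=
          Real.log_le_log (by positivity) hle
      _ = Real.log (lam + (1 - lam) * I) + α * r := by
          rw [Real.log_mul (ne_of_gt hpos) (ne_of_gt ht0), hlogt]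
  -- bound the second log
  have hB : Real.log c + α * r ≤ Real.log S := by
    calc Real.log c + α * r = Real.log (c * t) := by
          rw [Real.log_mul (ne_of_gt hc0) (ne_of_gt ht0), hlogt]
      _ ≤ Real.log S := Real.log_le_log hct0 hctS
  have hfrac : 0 < (1 + α) / α := by positivity
  have hB' : ((1 + α) / α) * (Real.log c + α * r) ≤ ((1 + α) / α) * Real.log S :=
    mul_le_mul_of_nonneg_left hB (le_of_lt hfrac)
  have hexp : ((1 + α) / α) * (α * r) = (1 + α) * r := by
    field_simp
  have : Real.log (lam + (1 - lam) * (t * I)) - ((1 + α) / α) * Real.log S ≤ C - r := by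
    have h3 : ((1 + α) / α) * (Real.log c + α * r)
        = ((1 + α) / α) * Real.log c + (1 + α) * r := by
      rw [mul_add, hexp]
    linarith [hA, hB', h3]
  have hCr : C - r ≤ M - 1 := by linarith [hrCM]
  clear_value S t σ r C c I
  linarith [this, hCr]
end

section
/- Let f : ℝ → [0,∞) be a measurable probability density with respect to Lebesgue measure with f(0) > 0 and I := ∫_ℝ f(x)^{1+α} dx < ∞, let α > 0, λ ∈ [0,1) with λ̄ = 1−λ, and let X_1, …, X_n ∈ ℝ (n ≥ 1). Then for every index 1 ≤ j ≤ n and every σ > 0, the sample bridge divergence objective at θ = (X_j, σ) satisfies M_n(X_j, σ) ≤ log( n^{(1+α)/α} ( λσ^{α+1} + λ̄ σ I ) ) − C_f, where C_f = (1+α) log( λ̄^{1/α} f(0) ). Consequently M_n(X_j, σ) → −∞ as σ ↓ 0. -/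
open MeasureTheory Real Filter Topology

/-- Bound on the sample bridge divergence objective at `θ = (X_j, σ)`
for a location-scale family, and the consequent divergence to `−∞` as `σ ↓ 0`:
`M_n(X_j, σ) ≤ log( n^{(1+α)/α} ( λσ^{α+1} + λ̄ σ I ) ) − C_f`,
where `C_f = (1+α) log( λ̄^{1/α} f(0) )` and `I = ∫ f^{1+α}`. -/
theorem bridge_objective_bound_at_data_point
    (f : ℝ → ℝ) (hf_nonneg : ∀ x, 0 ≤ f x) (hf_meas : Measurable f)
    (hf_dens : ∫ x, f x = 1) (hf0 : 0 < f 0)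
    (α lam : ℝ) (hα : 0 < α) (hlam0 : 0 ≤ lam) (hlam1 : lam < 1)
    (hI_fin : Integrable (fun x => f x ^ (1 + α)))
    (n : ℕ) (hn : 1 ≤ n) (X : Fin n → ℝ) (j : Fin n) :
    (∀ σ : ℝ, 0 < σ →
      Real.log (lam + (1 - lam) * ∫ x, ((1 / σ) * f ((x - X j) / σ)) ^ (1 + α))
        - ((1 + α) / α) *
            Real.log (lam + (1 - lam) / (n : ℝ) * ∑ i, ((1 / σ) * f ((X i - X j) / σ)) ^ α)
      ≤ Real.log ((n : ℝ) ^ ((1 + α) / α) *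
            (lam * σ ^ (α + 1) + (1 - lam) * σ * ∫ x, f x ^ (1 + α)))
        - (1 + α) * Real.log ((1 - lam) ^ (1 / α) * f 0))
    ∧ Tendsto (fun σ : ℝ =>
        Real.log (lam + (1 - lam) * ∫ x, ((1 / σ) * f ((x - X j) / σ)) ^ (1 + α))
          - ((1 + α) / α) *
              Real.log (lam + (1 - lam) / (n : ℝ) * ∑ i, ((1 / σ) * f ((X i - X j) / σ)) ^ α))
        (𝓝[>] 0) atBot := by
  have h1α : (0:ℝ) < 1 + α := by linarith
  have hlam' : (0:ℝ) < 1 - lam := by linarith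
  have hn' : (0:ℝ) < (n : ℝ) := by exact_mod_cast hn
  set I := ∫ x, f x ^ (1 + α) with hIdef
  have hrpow_nonneg : ∀ x, 0 ≤ f x ^ (1 + α) := fun x => Real.rpow_nonneg (hf_nonneg x) _
  have hI0 : 0 ≤ I := integral_nonneg hrpow_nonneg
  have hIpos : 0 < I := by
    rcases hI0.lt_or_eq with h | h
    · exact h
    · exfalso
      have hz := (integral_eq_zero_iff_of_nonneg hrpow_nonneg hI_fin).mp h.symm
      have hf0ae : f =ᵐ[(volume : Measure ℝ)] 0 := by
        filter_upwards [hz] with x hx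
        have hx' : f x ^ (1 + α) = 0 := hx
        by_contra hne
        have hpos : 0 < f x := lt_of_le_of_ne (hf_nonneg x) (Ne.symm hne)
        have := Real.rpow_pos_of_pos hpos (1 + α)
        rw [hx'] at this; exact lt_irrefl 0 this
      have : (∫ x, f x) = 0 := by rw [integral_congr_ae hf0ae]; simp
      rw [hf_dens] at this; norm_num at this
  -- integral computation
  have hint : ∀ σ : ℝ, 0 < σ →
      (∫ x, ((1 / σ) * f ((x - X j) / σ)) ^ (1 + α)) = σ ^ (-α) * I := by
    intro σ hσ
    have h1 : ∀ x : ℝ, ((1 / σ) * f ((x - X j) / σ)) ^ (1 + α)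
        = (1 / σ) ^ (1 + α) * ((fun y : ℝ => f (y / σ) ^ (1 + α)) (x - X j)) := by
      intro x
      rw [Real.mul_rpow (by positivity) (hf_nonneg _)]
    simp_rw [h1]
    rw [MeasureTheory.integral_const_mul]
    rw [integral_sub_right_eq_self (μ := volume) (fun y : ℝ => f (y / σ) ^ (1 + α)) (X j)]
    have h2 : (∫ x : ℝ, f (x / σ) ^ (1 + α))
        = |σ| • ∫ y : ℝ, f y ^ (1 + α) :=
      MeasureTheory.Measure.integral_comp_div (fun y : ℝ => f y ^ (1 + α)) σ
    rw [h2, abs_of_pos hσ, smul_eq_mul]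
    have e1 : (1 / σ : ℝ) ^ (1 + α) = σ ^ (-(1 + α)) := by
      rw [one_div, Real.inv_rpow hσ.le, ← Real.rpow_neg hσ.le]
    rw [e1, ← hIdef]
    rw [show σ ^ (-(1 + α)) * (σ * I) = (σ ^ (-(1 + α)) * σ) * I by ring]
    congr 1
    rw [← Real.rpow_add_one hσ.ne']
    norm_num
  -- main bound
  have hbound : ∀ σ : ℝ, 0 < σ →
      Real.log (lam + (1 - lam) * ∫ x, ((1 / σ) * f ((x - X j) / σ)) ^ (1 + α))
        - ((1 + α) / α) *
            Real.log (lam + (1 - lam) / (n : ℝ) * ∑ i, ((1 / σ) * f ((X i - X j) / σ)) ^ α)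
      ≤ Real.log ((n : ℝ) ^ ((1 + α) / α) *
            (lam * σ ^ (α + 1) + (1 - lam) * σ * I))
        - (1 + α) * Real.log ((1 - lam) ^ (1 / α) * f 0) := by
    intro σ hσ
    have hσα : (0:ℝ) < σ ^ (-α) := Real.rpow_pos_of_pos hσ _
    have hσα' : (0:ℝ) < σ ^ α := Real.rpow_pos_of_pos hσ _
    set P : ℝ := lam * σ ^ α + (1 - lam) * I with hPdef
    have hP : 0 < P := by positivity
    -- first log
    have hA : lam + (1 - lam) * ∫ x, ((1 / σ) * f ((x - X j) / σ)) ^ (1 + α)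
        = σ ^ (-α) * P := by
      rw [hint σ hσ, hPdef]
      have : σ ^ (-α) * σ ^ α = 1 := by
        rw [← Real.rpow_add hσ]; simp
      nlinarith [this]
    -- sum lower bound
    set B0 : ℝ := (1 - lam) / n * ((1 / σ) * f 0) ^ α with hB0def
    have hbase : (0:ℝ) < (1 / σ) * f 0 := by positivity
    have hB0 : 0 < B0 := by positivity
    have hsum : B0 ≤ lam + (1 - lam) / (n : ℝ)
        * ∑ i, ((1 / σ) * f ((X i - X j) / σ)) ^ α := by
      have hterm : ((1 / σ) * f ((X j - X j) / σ)) ^ α = ((1 / σ) * f 0) ^ α := by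
        rw [sub_self, zero_div]
      have hle : ((1 / σ) * f 0) ^ α
          ≤ ∑ i, ((1 / σ) * f ((X i - X j) / σ)) ^ α := by
        rw [← hterm]
        exact Finset.single_le_sum (f := fun i => ((1 / σ) * f ((X i - X j) / σ)) ^ α)
          (fun i _ => Real.rpow_nonneg (mul_nonneg (div_nonneg zero_le_one hσ.le) (hf_nonneg _)) α) (Finset.mem_univ j)
      have := mul_le_mul_of_nonneg_left hle (le_of_lt (by positivity : (0:ℝ) < (1 - lam) / n))
      rw [hB0def]; linarith
    have hS : 0 < lam + (1 - lam) / (n : ℝ)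
        * ∑ i, ((1 / σ) * f ((X i - X j) / σ)) ^ α := lt_of_lt_of_le hB0 hsum
    have hlogS : Real.log B0
        ≤ Real.log (lam + (1 - lam) / (n : ℝ)
            * ∑ i, ((1 / σ) * f ((X i - X j) / σ)) ^ α) :=
      Real.log_le_log hB0 hsum
    have hc : (0:ℝ) < (1 + α) / α := by positivity
    have step1 : Real.log (lam + (1 - lam) * ∫ x, ((1 / σ) * f ((x - X j) / σ)) ^ (1 + α))
        - ((1 + α) / α) *
            Real.log (lam + (1 - lam) / (n : ℝ) * ∑ i, ((1 / σ) * f ((X i - X j) / σ)) ^ α)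
        ≤ Real.log (σ ^ (-α) * P) - ((1 + α) / α) * Real.log B0 := by
      rw [hA]
      have := mul_le_mul_of_nonneg_left hlogS hc.le
      linarith
    refine step1.trans (le_of_eq ?_)
    -- expand all logs
    have eA : Real.log (σ ^ (-α) * P) = -α * Real.log σ + Real.log P := by
      rw [Real.log_mul (ne_of_gt hσα) (ne_of_gt hP), Real.log_rpow hσ]
    have eB : Real.log B0 = Real.log (1 - lam) - Real.log n
        + α * (Real.log (f 0) - Real.log σ) := by
      rw [hB0def, Real.log_mul (by positivity) (ne_of_gt (Real.rpow_pos_of_pos hbase α)),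
        Real.log_div (ne_of_gt hlam') (ne_of_gt hn'), Real.log_rpow hbase,
        Real.log_mul (by positivity) (ne_of_gt hf0), Real.log_div one_ne_zero (ne_of_gt hσ),
        Real.log_one]
      ring
    have eR : Real.log ((n : ℝ) ^ ((1 + α) / α) *
          (lam * σ ^ (α + 1) + (1 - lam) * σ * I))
        = (1 + α) / α * Real.log n + Real.log σ + Real.log P := by
      have hσP : lam * σ ^ (α + 1) + (1 - lam) * σ * I = σ * P := by
        rw [hPdef]
        rw [Real.rpow_add_one hσ.ne']; ring
      rw [hσP, Real.log_mul (ne_of_gt (Real.rpow_pos_of_pos hn' _)) (by positivity),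
        Real.log_mul (ne_of_gt hσ) (ne_of_gt hP), Real.log_rpow hn']
      ring
    have eC : Real.log ((1 - lam) ^ (1 / α) * f 0)
        = (1 / α) * Real.log (1 - lam) + Real.log (f 0) := by
      rw [Real.log_mul (ne_of_gt (Real.rpow_pos_of_pos hlam' _)) (ne_of_gt hf0),
        Real.log_rpow hlam']
    rw [eA, eB, eR, eC]
    field_simp
    ring
  refine ⟨hbound, ?_⟩
  -- tendsto part
  have hg0 : Tendsto (fun σ : ℝ => (n : ℝ) ^ ((1 + α) / α) *
      (lam * σ ^ (α + 1) + (1 - lam) * σ * I)) (𝓝[>] 0) (𝓝 0) := by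
    have h1 : Tendsto (fun σ : ℝ => σ ^ (α + 1)) (𝓝 0) (𝓝 0) := by
      have := (Real.continuousAt_rpow_const 0 (α + 1) (Or.inr (by linarith))).tendsto
      simpa [Real.zero_rpow (show α + 1 ≠ 0 by linarith)] using this
    have h2 : Tendsto (fun σ : ℝ => (n : ℝ) ^ ((1 + α) / α) *
        (lam * σ ^ (α + 1) + (1 - lam) * σ * I)) (𝓝 0) (𝓝 ((n : ℝ) ^ ((1 + α) / α) *
        (lam * 0 + (1 - lam) * 0 * I))) := by
      apply Tendsto.const_mul
      exact (h1.const_mul lam).add ((tendsto_id.const_mul (1 - lam)).mul_const I)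
    simp only [mul_zero, zero_mul, add_zero] at h2
    exact h2.mono_left nhdsWithin_le_nhds
  have hgpos : ∀ᶠ σ in 𝓝[>] (0:ℝ), (0:ℝ) < (n : ℝ) ^ ((1 + α) / α) *
      (lam * σ ^ (α + 1) + (1 - lam) * σ * I) := by
    filter_upwards [self_mem_nhdsWithin] with σ hσ
    have hσ' : (0:ℝ) < σ := hσ
    have : (0:ℝ) < σ ^ (α + 1) := Real.rpow_pos_of_pos hσ' _
    positivity
  have hg : Tendsto (fun σ : ℝ => (n : ℝ) ^ ((1 + α) / α) *
      (lam * σ ^ (α + 1) + (1 - lam) * σ * I)) (𝓝[>] 0) (𝓝[>] 0) :=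
    tendsto_nhdsWithin_of_tendsto_nhds_of_eventually_within _ hg0 hgpos
  have hlogg : Tendsto (fun σ : ℝ => Real.log ((n : ℝ) ^ ((1 + α) / α) *
      (lam * σ ^ (α + 1) + (1 - lam) * σ * I))) (𝓝[>] 0) atBot :=
    Real.tendsto_log_nhdsGT_zero.comp hg
  have hU : Tendsto (fun σ : ℝ => Real.log ((n : ℝ) ^ ((1 + α) / α) *
      (lam * σ ^ (α + 1) + (1 - lam) * σ * I))
      - (1 + α) * Real.log ((1 - lam) ^ (1 / α) * f 0)) (𝓝[>] 0) atBot := by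
    simpa [sub_eq_add_neg] using
      tendsto_atBot_add_const_right (𝓝[>] (0:ℝ))
        (-((1 + α) * Real.log ((1 - lam) ^ (1 / α) * f 0))) hlogg
  refine tendsto_atBot_mono' _ ?_ hU
  filter_upwards [self_mem_nhdsWithin] with σ hσ
  exact hbound σ hσ
end

section
/- Let f : ℝ → [0,∞) be a measurable probability density with respect to Lebesgue measure with 0 < ∫_ℝ f(x)^{1+α} dx < ∞ and f(x) → 0 as |x| → ∞, let α > 0, and let X_1, …, X_n ∈ ℝ (n ≥ 1). If μ ∉ {X_1, …, X_n}, then the sample DPD objective diverges: lim_{σ → 0⁺} [ ∫_ℝ f_{(μ,σ)}(x)^{1+α} dx − ((1+α)/(αn)) Σ_{i=1}^n f_{(μ,σ)}(X_i)^α ] = +∞. -/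
open MeasureTheory Real Filter Topology

/-- If `μ₀` is distinct from all data points and `f(x) → 0` as
`|x| → ∞`, the sample DPD objective for the location-scale family diverges to
`+∞` as `σ ↓ 0`. -/
theorem dpd_objective_diverges_mu_not_data
    (f : ℝ → ℝ) (hf_nonneg : ∀ x, 0 ≤ f x) (hf_meas : Measurable f)
    (hf_dens : ∫ x, f x = 1) (α : ℝ) (hα : 0 < α)
    (hI_pos : 0 < ∫ x, f x ^ (1 + α))
    (hI_fin : Integrable (fun x => f x ^ (1 + α)))
    (hf_lim : Tendsto f (cocompact ℝ) (𝓝 0))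
    (n : ℕ) (hn : 1 ≤ n) (X : Fin n → ℝ) (μ₀ : ℝ) (hμ₀ : ∀ i, X i ≠ μ₀) :
    Tendsto (fun σ : ℝ =>
        (∫ x, ((1 / σ) * f ((x - μ₀) / σ)) ^ (1 + α))
          - ((1 + α) / (α * (n : ℝ))) * ∑ i, ((1 / σ) * f ((X i - μ₀) / σ)) ^ α)
      (𝓝[>] 0) atTop := by
  set I : ℝ := ∫ x, f x ^ (1 + α) with hI
  -- key pointwise identity for σ > 0
  have key : ∀ σ : ℝ, 0 < σ →
      (∫ x, ((1 / σ) * f ((x - μ₀) / σ)) ^ (1 + α))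
        - ((1 + α) / (α * (n : ℝ))) * ∑ i, ((1 / σ) * f ((X i - μ₀) / σ)) ^ α
      = σ ^ (-α) *
        (I - ((1 + α) / (α * (n : ℝ))) * ∑ i, f ((X i - μ₀) / σ) ^ α) := by
    intro σ hσ
    have hσ' : (0:ℝ) ≤ 1 / σ := by positivity
    have hint : (∫ x, ((1 / σ) * f ((x - μ₀) / σ)) ^ (1 + α)) = σ ^ (-α) * I := by
      have h1 : ∀ x : ℝ, ((1 / σ) * f ((x - μ₀) / σ)) ^ (1 + α)
          = (1 / σ) ^ (1 + α) * f ((x - μ₀) / σ) ^ (1 + α) := fun x =>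
        Real.mul_rpow hσ' (hf_nonneg _)
      simp only [h1]
      rw [integral_const_mul]
      have h2 : (∫ x, f ((x - μ₀) / σ) ^ (1 + α)) = σ * I := by
        have := MeasureTheory.Measure.integral_comp_div (fun y => f (y) ^ (1 + α)) σ
        have h3 : (∫ x, f ((x - μ₀) / σ) ^ (1 + α))
            = ∫ x, f (x / σ) ^ (1 + α) := by
          exact integral_sub_right_eq_self (fun y => f (y / σ) ^ (1 + α)) μ₀
        rw [h3, this, abs_of_pos hσ, smul_eq_mul]
      rw [h2]
      have : (1 / σ) ^ (1 + α) = σ ^ (-(1 + α)) := by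
        rw [one_div, ← Real.rpow_neg_one σ, ← Real.rpow_mul hσ.le]
        norm_num
      rw [this]
      rw [show σ * I = σ ^ (1:ℝ) * I by rw [Real.rpow_one]]
      rw [← mul_assoc, ← Real.rpow_add hσ]
      ring_nf
    have hsum : ∀ i : Fin n, ((1 / σ) * f ((X i - μ₀) / σ)) ^ α
        = σ ^ (-α) * f ((X i - μ₀) / σ) ^ α := by
      intro i
      rw [Real.mul_rpow hσ' (hf_nonneg _)]
      congr 1
      rw [one_div, ← Real.rpow_neg_one σ, ← Real.rpow_mul hσ.le]
      ring_nf
    rw [hint]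
    simp only [hsum]
    rw [← Finset.mul_sum]
    ring
  have heq : ∀ᶠ σ in 𝓝[>] (0:ℝ),
      (fun σ : ℝ => σ ^ (-α) *
        (I - ((1 + α) / (α * (n : ℝ))) * ∑ i, f ((X i - μ₀) / σ) ^ α)) σ
      = (∫ x, ((1 / σ) * f ((x - μ₀) / σ)) ^ (1 + α))
          - ((1 + α) / (α * (n : ℝ))) * ∑ i, ((1 / σ) * f ((X i - μ₀) / σ)) ^ α := by
    filter_upwards [self_mem_nhdsWithin] with σ hσ
    exact (key σ hσ).symm
  refine Tendsto.congr' heq ?_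
  -- σ^(-α) → atTop
  have h1 : Tendsto (fun σ : ℝ => σ ^ (-α)) (𝓝[>] 0) atTop := by
    have : Tendsto (fun σ : ℝ => (σ⁻¹) ^ α) (𝓝[>] 0) atTop :=
      (tendsto_rpow_atTop hα).comp tendsto_inv_nhdsGT_zero
    refine this.congr' ?_
    filter_upwards [self_mem_nhdsWithin] with σ hσ
    rw [← Real.rpow_neg_one σ, ← Real.rpow_mul (le_of_lt hσ)]
    ring_nf
  -- bracket → I
  have h2 : Tendsto (fun σ : ℝ =>
      I - ((1 + α) / (α * (n : ℝ))) * ∑ i, f ((X i - μ₀) / σ) ^ α)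
      (𝓝[>] 0) (𝓝 I) := by
    have hterm : ∀ i : Fin n, Tendsto (fun σ : ℝ => f ((X i - μ₀) / σ) ^ α)
        (𝓝[>] 0) (𝓝 0) := by
      intro i
      have hc : X i - μ₀ ≠ 0 := sub_ne_zero.mpr (hμ₀ i)
      have harg : Tendsto (fun σ : ℝ => (X i - μ₀) / σ) (𝓝[>] 0) (cocompact ℝ) := by
        rw [← Metric.cobounded_eq_cocompact, ← comap_norm_atTop, tendsto_comap_iff]
        have : Tendsto (fun σ : ℝ => |X i - μ₀| * σ⁻¹) (𝓝[>] 0) atTop :=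
          Tendsto.const_mul_atTop (abs_pos.mpr hc) tendsto_inv_nhdsGT_zero
        refine this.congr' ?_
        filter_upwards [self_mem_nhdsWithin] with σ hσ
        simp [Function.comp, abs_div, abs_of_pos (show (0:ℝ) < σ from hσ), div_eq_mul_inv]
      have : Tendsto (fun σ : ℝ => f ((X i - μ₀) / σ)) (𝓝[>] 0) (𝓝 0) :=
        hf_lim.comp harg
      have := this.rpow_const (p := α) (Or.inr hα.le)
      simpa [Real.zero_rpow hα.ne'] using this
    have hsum : Tendsto (fun σ : ℝ => ∑ i, f ((X i - μ₀) / σ) ^ α)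
        (𝓝[>] 0) (𝓝 0) := by
      have := tendsto_finset_sum Finset.univ (fun i _ => hterm i)
      simpa using this
    have := hsum.const_mul ((1 + α) / (α * (n : ℝ)))
    have := (tendsto_const_nhds (x := I) (f := 𝓝[>] (0:ℝ))).sub this
    simpa using this
  exact h1.atTop_mul_pos hI_pos h2
end

section
/- Let f : ℝ → [0,∞) be a measurable probability density with respect to Lebesgue measure with 0 < I := ∫_ℝ f(x)^{1+α} dx < ∞ and f(x) → 0 as |x| → ∞, let α > 0, and let X_1, …, X_n ∈ ℝ. Suppose μ = X_j for some 1 ≤ j ≤ n, that X_i ≠ μ for every i ≠ j, and that n > (1+α) f(0)^α / (α I). Then lim_{σ → 0⁺} [ ∫_ℝ f_{(μ,σ)}(x)^{1+α} dx − ((1+α)/(αn)) Σ_{i=1}^n f_{(μ,σ)}(X_i)^α ] = +∞. -/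
open MeasureTheory Real Filter Topology

/-- If `μ₀ = X_j` (with all other data points distinct from `X_j`),
`f(x) → 0` as `|x| → ∞`, and `n > (1+α) f(0)^α / (α I)` with `I = ∫ f^{1+α}`,
the sample DPD objective for the location-scale family diverges to `+∞` as `σ ↓ 0`. -/
theorem dpd_objective_diverges_mu_equal_data
    (f : ℝ → ℝ) (hf_nonneg : ∀ x, 0 ≤ f x) (hf_meas : Measurable f)
    (hf_dens : ∫ x, f x = 1) (α : ℝ) (hα : 0 < α)
    (hI_pos : 0 < ∫ x, f x ^ (1 + α))
    (hI_fin : Integrable (fun x => f x ^ (1 + α)))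
    (hf_lim : Tendsto f (cocompact ℝ) (𝓝 0))
    (n : ℕ) (X : Fin n → ℝ) (j : Fin n) (μ₀ : ℝ) (hμ₀ : μ₀ = X j)
    (hdistinct : ∀ i, i ≠ j → X i ≠ X j)
    (hn : ((1 + α) * f 0 ^ α) / (α * ∫ x, f x ^ (1 + α)) < (n : ℝ)) :
    Tendsto (fun σ : ℝ =>
        (∫ x, ((1 / σ) * f ((x - μ₀) / σ)) ^ (1 + α))
          - ((1 + α) / (α * (n : ℝ))) * ∑ i, ((1 / σ) * f ((X i - μ₀) / σ)) ^ α)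
      (𝓝[>] 0) atTop := by
  set I := ∫ x, f x ^ (1 + α) with hI
  have hnR : (0:ℝ) < n := by exact_mod_cast j.pos
  set K := (1 + α) / (α * (n : ℝ)) with hK
  have hKpos : 0 < K := by positivity
  set L := I - K * f 0 ^ α with hL
  have hLpos : 0 < L := by
    have h1 : (1 + α) * f 0 ^ α < (n : ℝ) * (α * I) := by
      rwa [div_lt_iff₀ (by positivity)] at hn
    have h2 : K * f 0 ^ α < I := by
      rw [hK, div_mul_eq_mul_div, div_lt_iff₀ (by positivity)]
      nlinarith
    simp only [hL]; linarith
  -- the key algebraic identity for σ > 0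
  have key : ∀ σ : ℝ, σ ∈ Set.Ioi (0:ℝ) →
      (1/σ) ^ α * (I - K * ∑ i, f ((X i - μ₀)/σ) ^ α)
      = (∫ x, ((1 / σ) * f ((x - μ₀) / σ)) ^ (1 + α))
          - K * ∑ i, ((1 / σ) * f ((X i - μ₀) / σ)) ^ α := by
    intro σ hσ
    have hσ : (0:ℝ) < σ := hσ
    have hσ' : (0:ℝ) < 1/σ := by positivity
    have hint : (∫ x, ((1 / σ) * f ((x - μ₀) / σ)) ^ (1 + α)) = (1/σ) ^ α * I := by
      have h1 : ∀ x : ℝ, ((1 / σ) * f ((x - μ₀) / σ)) ^ (1 + α)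
          = (1/σ) ^ (1+α) * f ((x - μ₀) / σ) ^ (1 + α) := fun x =>
        Real.mul_rpow hσ'.le (hf_nonneg _)
      simp_rw [h1, integral_const_mul]
      have h2 : (∫ x, f ((x - μ₀) / σ) ^ (1 + α)) = σ * I := by
        have hsub := MeasureTheory.integral_sub_right_eq_self
          (μ := (volume : Measure ℝ)) (fun y => f (y / σ) ^ (1 + α)) μ₀
        have hdiv := MeasureTheory.Measure.integral_comp_div
          (fun y => f y ^ (1 + α)) σ
        rw [hsub, hdiv, abs_of_pos hσ, smul_eq_mul]
      rw [h2, Real.rpow_add hσ', Real.rpow_one]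
      field_simp
    have hsum : ∀ i : Fin n, ((1 / σ) * f ((X i - μ₀) / σ)) ^ α
        = (1/σ) ^ α * f ((X i - μ₀) / σ) ^ α := fun i =>
      Real.mul_rpow hσ'.le (hf_nonneg _)
    simp_rw [hint, hsum, ← Finset.mul_sum]
    ring
  -- now prove the main limit
  have hpow : Tendsto (fun σ : ℝ => (1/σ) ^ α) (𝓝[>] 0) atTop := by
    apply (tendsto_rpow_atTop hα).comp
    have h := (tendsto_inv_nhdsGT_zero : Tendsto (fun x : ℝ => x⁻¹) (𝓝[>] 0) atTop)
    exact h.congr (fun x => (one_div x).symm)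
  have hsum : Tendsto (fun σ : ℝ => ∑ i, f ((X i - μ₀)/σ) ^ α) (𝓝[>] 0)
      (𝓝 (f 0 ^ α)) := by
    have hrw : (f 0 ^ α : ℝ) = ∑ i : Fin n, (if i = j then f 0 ^ α else 0) := by simp
    rw [hrw]
    refine tendsto_finset_sum _ (fun i _ => ?_)
    by_cases hi : i = j
    · subst hi
      simp only [if_true, hμ₀, sub_self, zero_div]
      exact tendsto_const_nhds
    · simp only [hi, if_false]
      have hc : X i - μ₀ ≠ 0 := sub_ne_zero.mpr (hμ₀ ▸ hdistinct i hi)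
      have h1 : Tendsto (fun σ : ℝ => (X i - μ₀)/σ) (𝓝[>] 0) (cocompact ℝ) := by
        rw [cocompact_eq_atBot_atTop]
        rcases hc.lt_or_gt with hneg | hpos
        · refine Tendsto.mono_right ?_ le_sup_left
          simp_rw [div_eq_mul_inv]
          exact (tendsto_const_mul_atBot_of_neg hneg).mpr tendsto_inv_nhdsGT_zero
        · refine Tendsto.mono_right ?_ le_sup_right
          simp_rw [div_eq_mul_inv]
          exact (tendsto_const_mul_atTop_of_pos hpos).mpr tendsto_inv_nhdsGT_zero
      have h2 := (hf_lim.comp h1).rpow_const (Or.inr hα.le)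
      simpa [Real.zero_rpow hα.ne', Function.comp] using h2
  have hbr : Tendsto (fun σ : ℝ => I - K * ∑ i, f ((X i - μ₀)/σ) ^ α) (𝓝[>] 0)
      (𝓝 L) := by
    rw [hL]
    exact tendsto_const_nhds.sub (hsum.const_mul K)
  have main : Tendsto (fun σ : ℝ => (1/σ) ^ α * (I - K * ∑ i, f ((X i - μ₀)/σ) ^ α))
      (𝓝[>] 0) atTop := hpow.atTop_mul_pos hLpos hbr
  exact main.congr' (eventually_mem_nhdsWithin.mono key)
end

section
/- Let f : ℝ → [0,∞) be a measurable probability density supported on (0,∞) (with respect to Lebesgue measure) with f(1) > 0 and 0 < ∫_0^∞ f(x)^{1+α} dx < ∞, let α > 0, and let X_1, …, X_n > 0 with X_{(1)} = min_{1 ≤ i ≤ n} X_i. Then the sample LDPD objective for the scale family satisfies inf_{σ > 0} [ log ∫_0^∞ f_σ(x)^{1+α} dx − (1 + 1/α) log( (1/n) Σ_{i=1}^n f_σ(X_i)^α ) ] ≤ log( n^{1+1/α} X_{(1)} ) + D_f, where f_σ(x) = (1/σ) f(x/σ) and D_f = log ∫_0^∞ f(x)^{1+α} dx − (1+α) log f(1).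 -/
open MeasureTheory Real Filter Topology

/-- For a scale family on `(0,∞)`, the sample LDPD objective gets
below `log(n^{1+1/α} X_(1)) + D_f` (the infimum over `σ > 0` is at most this
bound; the bound is realized at `σ = X_(1)`), where `X_(1)` is the sample
minimum and `D_f = log ∫ f^{1+α} − (1+α) log f(1)`. -/
theorem ldpd_scale_family_inf_bound
    (f : ℝ → ℝ) (α : ℝ) (hα : 0 < α)
    (hf_nonneg : ∀ x, 0 ≤ f x) (hf_meas : Measurable f)
    (hf_supp : ∀ x ≤ (0 : ℝ), f x = 0) (hf1 : 0 < f 1)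
    (hf_dens : ∫ x, f x = 1)
    (hI_pos : 0 < ∫ x, f x ^ (1 + α))
    (hI_fin : Integrable (fun x => f x ^ (1 + α)))
    (n : ℕ) (hn : 0 < n) (X : Fin n → ℝ) (hX_pos : ∀ i, 0 < X i)
    (X1 : ℝ) (hX1 : IsLeast (Set.range X) X1) :
    ∃ σ : ℝ, 0 < σ ∧
      Real.log (∫ x, ((1 / σ) * f (x / σ)) ^ (1 + α))
        - (1 + 1 / α) * Real.log ((1 / (n : ℝ)) * ∑ i, ((1 / σ) * f (X i / σ)) ^ α)
      ≤ Real.log ((n : ℝ) ^ (1 + 1 / α) * X1)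
        + (Real.log (∫ x, f x ^ (1 + α)) - (1 + α) * Real.log (f 1)) := by
  obtain ⟨⟨i0, hi0⟩, hlb⟩ := hX1
  have hX1pos : 0 < X1 := hi0 ▸ hX_pos i0
  refine ⟨X1, hX1pos, ?_⟩
  set I := ∫ x, f x ^ (1 + α) with hIdef
  have hnpos : (0:ℝ) < n := Nat.cast_pos.mpr hn
  -- Step 1: compute the integral at σ = X1
  have hA : (∫ x, ((1 / X1) * f (x / X1)) ^ (1 + α)) = X1 ^ (-α : ℝ) * I := by
    have h1 : ∀ x : ℝ, ((1 / X1) * f (x / X1)) ^ (1 + α)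
        = (1 / X1) ^ (1 + α) * f (x / X1) ^ (1 + α) := fun x =>
      Real.mul_rpow (by positivity) (hf_nonneg _)
    simp_rw [h1]
    rw [integral_const_mul, MeasureTheory.Measure.integral_comp_div (fun x => f x ^ (1 + α)) X1,
      abs_of_pos hX1pos, smul_eq_mul]
    rw [one_div, Real.inv_rpow hX1pos.le, ← Real.rpow_neg hX1pos.le, ← mul_assoc,
      ← Real.rpow_add_one hX1pos.ne', show (-(1 + α) + 1 : ℝ) = -α by ring]
  -- Step 2: lower bound on the sum
  set S := ∑ i, ((1 / X1) * f (X i / X1)) ^ α with hSdef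
  have hterm : ((1 / X1) * f (X i0 / X1)) ^ α = (f 1 / X1) ^ α := by
    rw [hi0, div_self hX1pos.ne']
    ring_nf
  have hS : (f 1 / X1) ^ α ≤ S := by
    rw [← hterm]
    exact Finset.single_le_sum (f := fun i => ((1 / X1) * f (X i / X1)) ^ α)
      (fun i _ => Real.rpow_nonneg (mul_nonneg (by positivity) (hf_nonneg _)) α) (Finset.mem_univ i0)
  have hSpos : 0 < (1 / (n:ℝ)) * S :=
    lt_of_lt_of_le (by positivity) (mul_le_mul_of_nonneg_left hS (by positivity))
  -- log inequality for the sum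
  have hlog : Real.log ((1 / (n:ℝ)) * (f 1 / X1) ^ α) ≤ Real.log ((1 / (n:ℝ)) * S) := by
    apply Real.log_le_log (by positivity)
    exact mul_le_mul_of_nonneg_left hS (by positivity)
  have hexp1 : Real.log ((1 / (n:ℝ)) * (f 1 / X1) ^ α)
      = -Real.log n + α * (Real.log (f 1) - Real.log X1) := by
    rw [Real.log_mul (by positivity) (by positivity), Real.log_rpow (by positivity),
      Real.log_div hf1.ne' hX1pos.ne', one_div, Real.log_inv]
  have hexp2 : Real.log (X1 ^ (-α : ℝ) * I)
      = -α * Real.log X1 + Real.log I := by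
    rw [Real.log_mul (by positivity) hI_pos.ne', Real.log_rpow hX1pos]
  have hexp3 : Real.log ((n : ℝ) ^ (1 + 1 / α) * X1)
      = (1 + 1 / α) * Real.log n + Real.log X1 := by
    rw [Real.log_mul (by positivity) hX1pos.ne', Real.log_rpow hnpos]
  rw [hA, hexp2, hexp3]
  have key : (1 + 1 / α) * (-Real.log n + α * (Real.log (f 1) - Real.log X1))
      ≤ (1 + 1 / α) * Real.log ((1 / (n:ℝ)) * S) := by
    apply mul_le_mul_of_nonneg_left _ (by positivity)
    rw [← hexp1]; exact hlog
  have hid : (1 + 1 / α) * α = α + 1 := by field_simp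
  have hc : (1 + 1 / α) * (α * Real.log (f 1)) = (α + 1) * Real.log (f 1) := by
    rw [← mul_assoc, hid]
  have ha : (1 + 1 / α) * (α * Real.log X1) = (α + 1) * Real.log X1 := by
    rw [← mul_assoc, hid]
  nlinarith [key, hc, ha]
end

section
/- Let μ be a σ-finite measure on a measurable space 𝒳, let g and f be densities with respect to μ, and fix λ ∈ [0,1) with λ̄ = 1−λ. Define t₁(α) = ∫ f^{1+α}, t₂(α) = ∫ g f^α and t₃(α) = ∫ g^{1+α} for α ∈ [0,1], and assume these are finite, with t₁(0) = t₂(0) = t₃(0) = 1. Assume t₁(α) → 1 as α → 0⁺, that t₂ has right derivative at 0 equal to ∫ g log f, and that t₃ has right derivative at 0 equal to ∫ g log g (both finite). Then the bridge density power divergence converges to the Kullback–Leibler divergence: lim_{α → 0⁺} ρ^{(α,λ)}(g,f) = ∫ g log(g/f). -/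
open MeasureTheory Real Filter Topology

/-- As `α → 0⁺`, the bridge density power divergence
`ρ^{(α,λ)}(g,f)` converges to the Kullback–Leibler divergence `∫ g log(g/f)`. -/
theorem bridge_divergence_tendsto_KL
    {𝒳 : Type*} [MeasurableSpace 𝒳] (μ : Measure 𝒳) [SigmaFinite μ]
    (g f : 𝒳 → ℝ) (lam : ℝ) (hlam0 : 0 ≤ lam) (hlam1 : lam < 1)
    (hg_nonneg : ∀ x, 0 ≤ g x) (hf_nonneg : ∀ x, 0 ≤ f x)
    (hg_meas : Measurable g) (hf_meas : Measurable f)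
    (hg_dens : ∫ x, g x ∂μ = 1) (hf_dens : ∫ x, f x ∂μ = 1)
    (hsupp : ∀ x, 0 < g x → 0 < f x)
    (h_fin : ∀ α ∈ Set.Icc (0 : ℝ) 1,
      Integrable (fun x => f x ^ (1 + α)) μ ∧
      Integrable (fun x => g x * f x ^ α) μ ∧
      Integrable (fun x => g x ^ (1 + α)) μ)
    (ht1_zero : (∫ x, f x ^ (1 + (0 : ℝ)) ∂μ) = 1)
    (ht2_zero : (∫ x, g x * f x ^ (0 : ℝ) ∂μ) = 1)
    (ht3_zero : (∫ x, g x ^ (1 + (0 : ℝ)) ∂μ) = 1)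
    (ht1_lim : Tendsto (fun α : ℝ => ∫ x, f x ^ (1 + α) ∂μ) (𝓝[>] 0) (𝓝 1))
    (h_int_glogf : Integrable (fun x => g x * Real.log (f x)) μ)
    (h_int_glogg : Integrable (fun x => g x * Real.log (g x)) μ)
    (ht2_deriv : HasDerivWithinAt (fun α : ℝ => ∫ x, g x * f x ^ α ∂μ)
      (∫ x, g x * Real.log (f x) ∂μ) (Set.Ici 0) 0)
    (ht3_deriv : HasDerivWithinAt (fun α : ℝ => ∫ x, g x ^ (1 + α) ∂μ)
      (∫ x, g x * Real.log (g x) ∂μ) (Set.Ici 0) 0) :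
    Tendsto (fun α : ℝ =>
        (1 / (1 - lam)) * Real.log (lam + (1 - lam) * ∫ x, f x ^ (1 + α) ∂μ)
          - ((1 + α) / (α * (1 - lam))) *
              Real.log (lam + (1 - lam) * ∫ x, g x * f x ^ α ∂μ)
          + (1 / (α * (1 - lam))) *
              Real.log (lam + (1 - lam) * ∫ x, g x ^ (1 + α) ∂μ))
      (𝓝[>] 0) (𝓝 (∫ x, g x * Real.log (g x / f x) ∂μ)) := by
  have hlb : (0:ℝ) < 1 - lam := by linarith
  have hlbne : (1 - lam) ≠ 0 := ne_of_gt hlb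
  set L2 := ∫ x, g x * Real.log (f x) ∂μ with hL2
  set L3 := ∫ x, g x * Real.log (g x) ∂μ with hL3
  have hKL : (∫ x, g x * Real.log (g x / f x) ∂μ) = L3 - L2 := by
    have hpt : ∀ x, g x * Real.log (g x / f x)
        = g x * Real.log (g x) - g x * Real.log (f x) := by
      intro x
      rcases eq_or_lt_of_le (hg_nonneg x) with h | h
      · simp [← h]
      · have hf : f x ≠ 0 := ne_of_gt (hsupp x h)
        rw [Real.log_div (ne_of_gt h) hf]; ring
    rw [integral_congr_ae (Filter.Eventually.of_forall hpt),
      integral_sub h_int_glogg h_int_glogf]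
  rw [hKL]
  have h20 : lam + (1 - lam) * (∫ x, g x * f x ^ (0:ℝ) ∂μ) = 1 := by
    rw [ht2_zero]; ring
  have h30 : lam + (1 - lam) * (∫ x, g x ^ (1 + (0:ℝ)) ∂μ) = 1 := by
    rw [ht3_zero]; ring
  -- log-composed derivatives
  have hF2 : HasDerivWithinAt
      (fun α : ℝ => Real.log (lam + (1 - lam) * ∫ x, g x * f x ^ α ∂μ))
      ((1 - lam) * L2) (Set.Ici 0) 0 := by
    have hinner : HasDerivWithinAt
        (fun α : ℝ => lam + (1 - lam) * ∫ x, g x * f x ^ α ∂μ)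
        ((1 - lam) * L2) (Set.Ici 0) 0 :=
      (ht2_deriv.const_mul (1 - lam)).const_add lam
    have hlog : HasDerivAt Real.log (1 : ℝ)
        ((fun α : ℝ => lam + (1 - lam) * ∫ x, g x * f x ^ α ∂μ) 0) := by
      show HasDerivAt Real.log 1 (lam + (1 - lam) * ∫ x, g x * f x ^ (0:ℝ) ∂μ)
      rw [h20]
      simpa using Real.hasDerivAt_log (one_ne_zero (α := ℝ))
    simpa [Function.comp_def] using hlog.comp_hasDerivWithinAt 0 hinner
  have hF3 : HasDerivWithinAt
      (fun α : ℝ => Real.log (lam + (1 - lam) * ∫ x, g x ^ (1 + α) ∂μ))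
      ((1 - lam) * L3) (Set.Ici 0) 0 := by
    have hinner : HasDerivWithinAt
        (fun α : ℝ => lam + (1 - lam) * ∫ x, g x ^ (1 + α) ∂μ)
        ((1 - lam) * L3) (Set.Ici 0) 0 :=
      (ht3_deriv.const_mul (1 - lam)).const_add lam
    have hlog : HasDerivAt Real.log (1 : ℝ)
        ((fun α : ℝ => lam + (1 - lam) * ∫ x, g x ^ (1 + α) ∂μ) 0) := by
      show HasDerivAt Real.log 1 (lam + (1 - lam) * ∫ x, g x ^ (1 + (0:ℝ)) ∂μ)
      rw [h30]
      simpa using Real.hasDerivAt_log (one_ne_zero (α := ℝ))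
    simpa [Function.comp_def] using hlog.comp_hasDerivWithinAt 0 hinner
  -- slope limits
  have hs2 : Tendsto (fun α : ℝ =>
      (Real.log (lam + (1 - lam) * ∫ x, g x * f x ^ α ∂μ)) / α)
      (𝓝[>] 0) (𝓝 ((1 - lam) * L2)) := by
    have h := hasDerivWithinAt_iff_tendsto_slope.mp hF2
    rw [Set.Ici_sdiff_left] at h
    have hF20 : Real.log (lam + (1 - lam) * ∫ x, g x * f x ^ (0:ℝ) ∂μ) = 0 := by
      rw [h20, Real.log_one]
    refine h.congr fun α => ?_
    simp only [slope_def_field]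
    rw [hF20, sub_zero, sub_zero]
  have hs3 : Tendsto (fun α : ℝ =>
      (Real.log (lam + (1 - lam) * ∫ x, g x ^ (1 + α) ∂μ)) / α)
      (𝓝[>] 0) (𝓝 ((1 - lam) * L3)) := by
    have h := hasDerivWithinAt_iff_tendsto_slope.mp hF3
    rw [Set.Ici_sdiff_left] at h
    have hF30 : Real.log (lam + (1 - lam) * ∫ x, g x ^ (1 + (0:ℝ)) ∂μ) = 0 := by
      rw [h30, Real.log_one]
    refine h.congr fun α => ?_
    simp only [slope_def_field]
    rw [hF30, sub_zero, sub_zero]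
  -- term 1
  have hT1 : Tendsto (fun α : ℝ => (1 / (1 - lam)) *
      Real.log (lam + (1 - lam) * ∫ x, f x ^ (1 + α) ∂μ)) (𝓝[>] 0) (𝓝 0) := by
    have hin : Tendsto (fun α : ℝ => lam + (1 - lam) * ∫ x, f x ^ (1 + α) ∂μ)
        (𝓝[>] 0) (𝓝 1) := by
      have := (ht1_lim.const_mul (1 - lam)).const_add lam
      simpa using this
    have hlog : Tendsto (fun α : ℝ =>
        Real.log (lam + (1 - lam) * ∫ x, f x ^ (1 + α) ∂μ)) (𝓝[>] 0) (𝓝 0) := by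
      have := (Real.continuousAt_log one_ne_zero).tendsto.comp hin
      simpa [Function.comp_def] using this
    simpa using hlog.const_mul (1 / (1 - lam))
  -- term 2
  have hT2 : Tendsto (fun α : ℝ => ((1 + α) / (α * (1 - lam))) *
      Real.log (lam + (1 - lam) * ∫ x, g x * f x ^ α ∂μ)) (𝓝[>] 0) (𝓝 L2) := by
    have hcoef : Tendsto (fun α : ℝ => (1 + α) / (1 - lam)) (𝓝[>] 0)
        (𝓝 ((1 + 0) / (1 - lam))) :=
      (((continuous_const.add continuous_id).div_const _).tendsto 0).mono_left
        nhdsWithin_le_nhds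
    have hmul := hcoef.mul hs2
    have heq : ((1 + (0:ℝ)) / (1 - lam)) * ((1 - lam) * L2) = L2 := by
      field_simp; ring
    rw [heq] at hmul
    exact hmul.congr fun α => by simp only [div_eq_mul_inv, mul_inv]; ring
  -- term 3
  have hT3 : Tendsto (fun α : ℝ => (1 / (α * (1 - lam))) *
      Real.log (lam + (1 - lam) * ∫ x, g x ^ (1 + α) ∂μ)) (𝓝[>] 0) (𝓝 L3) := by
    have hmul := hs3.const_mul (1 / (1 - lam))
    have heq : (1 / (1 - lam)) * ((1 - lam) * L3) = L3 := by field_simp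
    rw [heq] at hmul
    exact hmul.congr fun α => by simp only [div_eq_mul_inv, mul_inv]; ring
  have hfin := (hT1.sub hT2).add hT3
  have : L3 - L2 = 0 - L2 + L3 := by ring
  rw [this]
  exact hfin
end

section
/- Let μ be a σ-finite measure on a measurable space 𝒳, let g and f be densities with respect to μ, fix α > 0, and assume t₁ = ∫ f^{1+α}, t₂ = ∫ g f^α and t₃ = ∫ g^{1+α} are finite. Then as λ → 1⁻ the bridge density power divergence converges to the density power divergence: lim_{λ → 1⁻} ρ^{(α,λ)}(g,f) = t₁ − (1 + 1/α) t₂ + (1/α) t₃ = ρ₁^{(α)}(g,f). -/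
open MeasureTheory Real Filter Topology

lemma bridge_aux (t : ℝ) :
    Tendsto (fun lam : ℝ => (1 / (1 - lam)) * Real.log (lam + (1 - lam) * t))
      (𝓝[<] (1:ℝ)) (𝓝 (t - 1)) := by
  have hlin : HasDerivAt (fun h : ℝ => 1 + h * (t - 1)) (t - 1) 0 := by
    simpa using ((hasDerivAt_id (0:ℝ)).mul_const (t - 1)).const_add 1
  have hlog : HasDerivAt (fun h : ℝ => Real.log (1 + h * (t - 1))) (t - 1) 0 := by
    have := hlin.log (by norm_num)
    simpa using this
  have hslope := hasDerivAt_iff_tendsto_slope.mp hlog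
  have hmap : Tendsto (fun lam : ℝ => 1 - lam) (𝓝[<] (1:ℝ)) (𝓝[≠] (0:ℝ)) := by
    have hcont : Tendsto (fun lam : ℝ => 1 - lam) (𝓝 (1:ℝ)) (𝓝 (0:ℝ)) := by
      have := Filter.Tendsto.const_sub (1:ℝ) (tendsto_id : Tendsto id (𝓝 (1:ℝ)) (𝓝 (1:ℝ)))
      simpa using this
    refine tendsto_nhdsWithin_of_tendsto_nhds_of_eventually_within _
      (hcont.mono_left nhdsWithin_le_nhds) ?_
    filter_upwards [self_mem_nhdsWithin] with lam hlam
    simp only [Set.mem_Iio] at hlam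
    simp only [Set.mem_compl_iff, Set.mem_singleton_iff]
    linarith
  have := hslope.comp hmap
  refine this.congr (fun lam => ?_)
  simp only [Function.comp, slope_def_field, div_eq_inv_mul]
  rw [show (1:ℝ) + 0 * (t - 1) = 1 by ring, Real.log_one,
    show (1:ℝ) + (1 - lam) * (t - 1) = lam + (1 - lam) * t by ring]
  ring

/-- As `λ → 1⁻`, the bridge density power divergence
`ρ^{(α,λ)}(g,f)` converges to the density power divergence
`ρ₁^{(α)}(g,f) = t₁ − (1 + 1/α) t₂ + (1/α) t₃`. -/
theorem bridge_divergence_tendsto_DPD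
    {𝒳 : Type*} [MeasurableSpace 𝒳] (μ : Measure 𝒳) [SigmaFinite μ]
    (g f : 𝒳 → ℝ) (α : ℝ) (hα : 0 < α)
    (hg_nonneg : ∀ x, 0 ≤ g x) (hf_nonneg : ∀ x, 0 ≤ f x)
    (hg_meas : Measurable g) (hf_meas : Measurable f)
    (hg_dens : ∫ x, g x ∂μ = 1) (hf_dens : ∫ x, f x ∂μ = 1)
    (h_int_1 : Integrable (fun x => f x ^ (1 + α)) μ)
    (h_int_2 : Integrable (fun x => g x * f x ^ α) μ)
    (h_int_3 : Integrable (fun x => g x ^ (1 + α)) μ) :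
    Tendsto (fun lam : ℝ =>
        (1 / (1 - lam)) * Real.log (lam + (1 - lam) * ∫ x, f x ^ (1 + α) ∂μ)
          - ((1 + α) / (α * (1 - lam))) *
              Real.log (lam + (1 - lam) * ∫ x, g x * f x ^ α ∂μ)
          + (1 / (α * (1 - lam))) *
              Real.log (lam + (1 - lam) * ∫ x, g x ^ (1 + α) ∂μ))
      (𝓝[<] 1)
      (𝓝 ((∫ x, f x ^ (1 + α) ∂μ) - (1 + 1 / α) * (∫ x, g x * f x ^ α ∂μ)
            + (1 / α) * ∫ x, g x ^ (1 + α) ∂μ)) := by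
  set t₁ := ∫ x, f x ^ (1 + α) ∂μ
  set t₂ := ∫ x, g x * f x ^ α ∂μ
  set t₃ := ∫ x, g x ^ (1 + α) ∂μ
  have h1 := bridge_aux t₁
  have h2 := (bridge_aux t₂).const_mul ((1 + α) / α)
  have h3 := (bridge_aux t₃).const_mul (1 / α)
  have hcomb := (h1.sub h2).add h3
  have hα' : α ≠ 0 := ne_of_gt hα
  have hval : (t₁ - 1) - (1 + α) / α * (t₂ - 1) + 1 / α * (t₃ - 1)
      = t₁ - (1 + 1 / α) * t₂ + (1 / α) * t₃ := by
    field_simp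
    ring
  rw [hval] at hcomb
  refine hcomb.congr (fun lam => ?_)
  rw [show (1 + α) / (α * (1 - lam)) = (1 + α) / α * (1 / (1 - lam)) by
      rw [mul_one_div, div_div],
    show 1 / (α * (1 - lam)) = 1 / α * (1 / (1 - lam)) by
      rw [mul_one_div, div_div]]
  ring
end

section
/- Let t₁, t₂ : ℝ → ℝ be differentiable at a point θ₀ with derivatives t₁'(θ₀), t₂'(θ₀), let α > 0 and λ ∈ [0,1) with λ̄ = 1−λ, and suppose D₁ := λ + λ̄ t₁(θ₀) > 0 and D₂ := λ + λ̄ t₂(θ₀) > 0. Then the bridge objective H(θ) = (1/λ̄) log(λ + λ̄ t₁(θ)) − ((1+α)/(αλ̄)) log(λ + λ̄ t₂(θ)) is differentiable at θ₀ with H'(θ₀) = ((1+α)/(D₁D₂)) · ( λ [ t₁'(θ₀)/(1+α) − t₂'(θ₀)/α ] + λ̄ [ t₂(θ₀) t₁'(θ₀)/(1+α) − t₁(θ₀) t₂'(θ₀)/α ] ). In particular, H'(θ₀) = 0 if and only if the convex combination of the DPD estimating function t₁'/(1+α) − t₂'/α and the LDPD estimating function t₂ t₁'/(1+α) − t₁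 t₂'/α, with weights λ and 1−λ, vanishes at θ₀. -/
open Real

/-- Derivative of the bridge objective
`H(θ) = (1/λ̄) log(λ + λ̄ t₁(θ)) − ((1+α)/(αλ̄)) log(λ + λ̄ t₂(θ))` at `θ₀`, and
the characterization of its critical points as the vanishing of the convex
combination (with weights `λ` and `1−λ`) of the DPD and LDPD estimating
functions. -/
theorem bridge_objective_hasDerivAt
    (t1 t2 : ℝ → ℝ) (θ0 t1' t2' : ℝ)
    (ht1 : HasDerivAt t1 t1' θ0) (ht2 : HasDerivAt t2 t2' θ0)
    (α lam : ℝ) (hα : 0 < α) (hlam0 : 0 ≤ lam) (hlam1 : lam < 1)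
    (hD1 : 0 < lam + (1 - lam) * t1 θ0) (hD2 : 0 < lam + (1 - lam) * t2 θ0) :
    HasDerivAt
      (fun θ => (1 / (1 - lam)) * Real.log (lam + (1 - lam) * t1 θ)
        - ((1 + α) / (α * (1 - lam))) * Real.log (lam + (1 - lam) * t2 θ))
      (((1 + α) / ((lam + (1 - lam) * t1 θ0) * (lam + (1 - lam) * t2 θ0))) *
        (lam * (t1' / (1 + α) - t2' / α)
          + (1 - lam) * (t2 θ0 * t1' / (1 + α) - t1 θ0 * t2' / α)))
      θ0
    ∧ ((((1 + α) / ((lam + (1 - lam) * t1 θ0) * (lam + (1 - lam) * t2 θ0))) *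
          (lam * (t1' / (1 + α) - t2' / α)
            + (1 - lam) * (t2 θ0 * t1' / (1 + α) - t1 θ0 * t2' / α)) = 0)
        ↔ (lam * (t1' / (1 + α) - t2' / α)
            + (1 - lam) * (t2 θ0 * t1' / (1 + α) - t1 θ0 * t2' / α) = 0)) := by
  have hlb : (0:ℝ) < 1 - lam := by linarith
  have hD1' := hD1.ne'
  have hD2' := hD2.ne'
  have h1 : HasDerivAt (fun θ => lam + (1 - lam) * t1 θ)
      ((1 - lam) * t1') θ0 := by
    simpa using ((ht1.const_mul (1 - lam)).const_add lam)
  have h2 : HasDerivAt (fun θ => lam + (1 - lam) * t2 θ)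
      ((1 - lam) * t2') θ0 := by
    simpa using ((ht2.const_mul (1 - lam)).const_add lam)
  have hl1 : HasDerivAt (fun θ => Real.log (lam + (1 - lam) * t1 θ))
      ((1 - lam) * t1' / (lam + (1 - lam) * t1 θ0)) θ0 := h1.log hD1'
  have hl2 : HasDerivAt (fun θ => Real.log (lam + (1 - lam) * t2 θ))
      ((1 - lam) * t2' / (lam + (1 - lam) * t2 θ0)) θ0 := h2.log hD2'
  have H := (hl1.const_mul (1 / (1 - lam))).sub
      (hl2.const_mul ((1 + α) / (α * (1 - lam))))
  constructor
  · refine H.congr_deriv ?_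
    have hb : (1 - lam) ≠ 0 := hlb.ne'
    have ha : α ≠ 0 := hα.ne'
    have ha1 : (1 + α) ≠ 0 := by linarith
    field_simp
    ring
  · constructor
    · intro h
      rcases mul_eq_zero.mp h with h' | h'
      · exfalso
        have : (1 + α) / ((lam + (1 - lam) * t1 θ0) * (lam + (1 - lam) * t2 θ0)) ≠ 0 :=
          div_ne_zero (by linarith) (by positivity)
        exact this h'
      · exact h'
    · intro h; rw [h, mul_zero]
end

section
/- (Consistency of minimum bridge divergence estimators.) Let Θ be a compact metric space, (𝒳, 𝒜, μ) a σ-finite measure space, and f : Θ × 𝒳 → [0,∞) jointly measurable with ∫ f_θ dμ = 1 for every θ ∈ Θ. Fix α ∈ (0,1] and λ ∈ (0,1) with λ̄ = 1−λ. Let g be a density with respect to μ and let X_1, X_2, … be iid 𝒳-valued random variables with distribution g·dμ on a probability space (Ω, 𝓕, P). Assume: (C2) there exists K : 𝒳 → [0,∞) with f_θ(x)^α ≤ K(x) for all θ and x, and ∫ K g dμ < ∞; (C3) for each θ ∈ Θ and each sequence θ_n → θ in Θ, f_{θ_n}(x) → f_θ(x) for μ-almost every x; the map θ ↦ ∫ f_θ^{1+α}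 dμ is finite-valued and continuous on Θ; and θ* ∈ Θ is the unique minimizer over Θ of the population objective ρ(θ) := (1/λ̄) log(λ + λ̄ ∫ f_θ^{1+α} dμ) − ((1+α)/(αλ̄)) log(λ + λ̄ ∫ g f_θ^α dμ). Let θ̂_n : Ω → Θ be measurable maps such that for every n and ω, θ̂_n(ω) minimizes over θ ∈ Θ the sample objective M_n(θ, ω) := (1/λ̄) log(λ + λ̄ ∫ f_θ^{1+α} dμ) − ((1+α)/(αλ̄)) log(λ + (λ̄/n) Σ_{i=1}^n f_θ(X_i(ω))^α). Then θ̂_n → θ* P-almost surely. -/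
open MeasureTheory ProbabilityTheory Real Filter Topology
open scoped ENNReal NNReal
open Set


section AnalyticNullMeasurable

variable {X : Type*} [TopologicalSpace X] [MeasurableSpace X] [BorelSpace X] [PolishSpace X]

theorem aux_sum_half_pow_le (ε : ℝ≥0∞) (k : ℕ) :
    ∑ j ∈ Finset.range k, ε / 2 ^ (j + 1) ≤ ε := by
  have h1 : ∑ j ∈ Finset.range k, ε / 2 ^ (j + 1) ≤ ∑' j : ℕ, ε / 2 ^ (j + 1) :=
    ENNReal.sum_le_tsum _
  refine h1.trans ?_
  have h2 : ∀ j : ℕ, ε / 2 ^ (j + 1) = ε * (2⁻¹ : ℝ≥0∞) ^ (j + 1) := by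
    intro j
    rw [div_eq_mul_inv, ENNReal.inv_pow]
  calc ∑' j : ℕ, ε / 2 ^ (j + 1) = ∑' j : ℕ, ε * (2⁻¹ : ℝ≥0∞) ^ (j + 1) := by
        simp_rw [h2]
    _ = ε * ∑' j : ℕ, (2⁻¹ : ℝ≥0∞) ^ (j + 1) := ENNReal.tsum_mul_left
    _ = ε * ((2⁻¹ : ℝ≥0∞) * ∑' j : ℕ, (2⁻¹ : ℝ≥0∞) ^ j) := by
        congr 1
        simp_rw [pow_succ, mul_comm]
        exact ENNReal.tsum_mul_left
    _ ≤ ε * ((2⁻¹ : ℝ≥0∞) * 2) := by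
        gcongr
        rw [ENNReal.tsum_geometric, ENNReal.one_sub_inv_two]
        simp
    _ = ε := by
        rw [ENNReal.inv_mul_cancel (by norm_num) (by norm_num), mul_one]

/-- Key approximation: an analytic set contains compact subsets of almost full outer measure. -/
theorem analytic_inner_compact {s : Set X} (hs : MeasureTheory.AnalyticSet s)
    (μ : Measure X) [IsFiniteMeasure μ] {ε : ℝ≥0∞} (hε : ε ≠ 0) :
    ∃ K : Set X, K ⊆ s ∧ IsCompact K ∧ μ s ≤ μ K + ε := by
  letI := TopologicalSpace.upgradeIsCompletelyMetrizable X
  rw [MeasureTheory.AnalyticSet] at hs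
  rcases hs with rfl | ⟨F, Fcont, rfl⟩
  · exact ⟨∅, Subset.rfl, isCompact_empty, by simp⟩
  set S : ℕ → (ℕ → ℕ) → Set (ℕ → ℕ) := fun k v => {σ | ∀ i, i < k → σ i ≤ v i} with hSdef
  have hS0 : ∀ v, S 0 v = univ := by
    intro v; ext σ; simp [hSdef]
  have hSmono_k : ∀ (k : ℕ) (v : ℕ → ℕ), S (k+1) v ⊆ S k v := by
    intro k v σ hσ i hi; exact hσ i (hi.trans (Nat.lt_succ_self k))
  have hSdep : ∀ (k : ℕ) (v w : ℕ → ℕ), (∀ i, i < k → v i = w i) → S k v = S k w := by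
    intro k v w h; ext σ; constructor <;> intro hσ i hi
    · rw [← h i hi]; exact hσ i hi
    · rw [h i hi]; exact hσ i hi
  -- the step of the recursion
  have step : ∀ (k : ℕ) (v : ℕ → ℕ),
      μ (range F) ≤ μ (F '' S k v) + ∑ j ∈ Finset.range k, ε / 2 ^ (j + 1) →
      ∃ M : ℕ, μ (range F) ≤ μ (F '' S (k+1) (Function.update v k M)) +
        ∑ j ∈ Finset.range (k+1), ε / 2 ^ (j + 1) := by
    intro k v hv
    have hεk : (ε / 2 ^ (k+1) : ℝ≥0∞) ≠ 0 := by
      simp only [ne_eq, ENNReal.div_eq_zero_iff, hε, false_or]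
      exact ENNReal.pow_ne_top (by norm_num)
    have hSup : ∀ M : ℕ, S (k+1) (Function.update v k M) = S k v ∩ {σ | σ k ≤ M} := by
      intro M
      ext σ
      constructor
      · intro hσ
        refine ⟨fun i hi => ?_, ?_⟩
        · have := hσ i (hi.trans (Nat.lt_succ_self k))
          rwa [Function.update_of_ne hi.ne] at this
        · have := hσ k (Nat.lt_succ_self k)
          rwa [Function.update_self] at this
      · rintro ⟨h1, h2⟩ i hi
        rcases Nat.lt_succ_iff_lt_or_eq.mp hi with hik | rfl
        · rw [Function.update_of_ne hik.ne]; exact h1 i hik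
        · rwa [Function.update_self]
    have hUnion : ⋃ M : ℕ, F '' S (k+1) (Function.update v k M) = F '' S k v := by
      apply Subset.antisymm
      · exact iUnion_subset fun M => image_mono (by rw [hSup M]; exact inter_subset_left)
      · rintro y ⟨σ, hσ, rfl⟩
        exact mem_iUnion.2 ⟨σ k, mem_image_of_mem F
          (by rw [hSup (σ k)]; exact mem_inter hσ (by simp))⟩
    have hdir : Monotone fun M : ℕ => F '' S (k+1) (Function.update v k M) := by
      intro M M' hMM'
      refine image_mono ?_
      rw [hSup M, hSup M']
      exact inter_subset_inter_right _ fun σ hσ => le_trans hσ hMM'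
    have hμA : μ (F '' S k v) = ⨆ M : ℕ, μ (F '' S (k+1) (Function.update v k M)) := by
      rw [← hUnion]
      exact Directed.measure_iUnion hdir.directed_le
    rcases le_or_gt (μ (F '' S k v)) (ε / 2 ^ (k+1)) with hA | hA
    · refine ⟨0, ?_⟩
      calc μ (range F) ≤ μ (F '' S k v) + ∑ j ∈ Finset.range k, ε / 2 ^ (j + 1) := hv
        _ ≤ ε / 2 ^ (k+1) + ∑ j ∈ Finset.range k, ε / 2 ^ (j + 1) := by gcongr
        _ ≤ μ (F '' S (k+1) (Function.update v k 0)) +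
            ∑ j ∈ Finset.range (k+1), ε / 2 ^ (j + 1) := by
            rw [Finset.sum_range_succ, add_comm (ε / 2 ^ (k+1))]
            exact le_add_self
    · have hAne : μ (F '' S k v) ≠ 0 := by
        intro h0; rw [h0] at hA; simp at hA
      have hlt' : μ (F '' S k v) - ε / 2 ^ (k+1) <
          ⨆ M : ℕ, μ (F '' S (k+1) (Function.update v k M)) := by
        rw [← hμA]
        exact ENNReal.sub_lt_self (measure_ne_top μ _) hAne hεk
      rcases lt_iSup_iff.mp hlt' with ⟨M, hM⟩
      refine ⟨M, ?_⟩
      have hback : μ (F '' S k v) ≤ μ (F '' S (k+1) (Function.update v k M)) + ε / 2 ^ (k+1) := by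
        have h5 := tsub_add_cancel_of_le hA.le
        calc μ (F '' S k v) = μ (F '' S k v) - ε / 2 ^ (k+1) + ε / 2 ^ (k+1) := h5.symm
          _ ≤ μ (F '' S (k+1) (Function.update v k M)) + ε / 2 ^ (k+1) :=
            add_le_add hM.le le_rfl
      calc μ (range F) ≤ μ (F '' S k v) + ∑ j ∈ Finset.range k, ε / 2 ^ (j + 1) := hv
        _ ≤ μ (F '' S (k+1) (Function.update v k M)) + ε / 2 ^ (k+1)
            + ∑ j ∈ Finset.range k, ε / 2 ^ (j + 1) := by gcongr
        _ = μ (F '' S (k+1) (Function.update v k M)) +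
            ∑ j ∈ Finset.range (k+1), ε / 2 ^ (j + 1) := by
            rw [Finset.sum_range_succ, add_assoc, add_comm (ε / 2 ^ (k+1))]
  -- recursion
  have base : μ (range F) ≤ μ (F '' S 0 (fun _ => 0)) +
      ∑ j ∈ Finset.range 0, ε / 2 ^ (j + 1) := by
    rw [hS0, image_univ]
    simp
  let seq : (k : ℕ) → {v : ℕ → ℕ //
      μ (range F) ≤ μ (F '' S k v) + ∑ j ∈ Finset.range k, ε / 2 ^ (j + 1)} := fun k =>
    Nat.rec ⟨fun _ => 0, base⟩
      (fun k ih => ⟨Function.update ih.1 k (step k ih.1 ih.2).choose,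
        (step k ih.1 ih.2).choose_spec⟩) k
  have seq_succ : ∀ k : ℕ, (seq (k+1)).1 =
      Function.update (seq k).1 k ((step k (seq k).1 (seq k).2).choose) := fun k => rfl
  set m : ℕ → ℕ := fun i => (seq (i+1)).1 i with hmdef
  have hagree : ∀ k i, i < k → (seq k).1 i = m i := by
    intro k
    induction k with
    | zero => intro i hi; omega
    | succ k ih =>
      intro i hi
      rcases Nat.lt_succ_iff_lt_or_eq.mp hi with hik | rfl
      · rw [seq_succ, Function.update_of_ne hik.ne, ih i hik]
      · rfl
  have hPk : ∀ k, μ (range F) ≤ μ (F '' S k m) + ε := by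
    intro k
    have h1 : S k ((seq k).1) = S k m := hSdep k _ _ (fun i hi => hagree k i hi)
    have h2 := (seq k).2
    rw [h1] at h2
    exact h2.trans (by gcongr; exact aux_sum_half_pow_le ε k)
  -- the compact set
  set Sinf : Set (ℕ → ℕ) := {σ | ∀ i, σ i ≤ m i} with hSinf
  have hSinfC : IsCompact Sinf := by
    have : Sinf = Set.pi univ (fun i => Iic (m i)) := by
      ext σ; simp [hSinf, Set.mem_pi, Pi.le_def]
    rw [this]
    exact isCompact_univ_pi fun i => (finite_Iic (m i)).isCompact
  refine ⟨F '' Sinf, image_subset_range F Sinf, hSinfC.image Fcont, ?_⟩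
  -- decreasing closures
  set D : ℕ → Set X := fun k => closure (F '' S k m) with hDdef
  have hDanti : Antitone D := by
    apply antitone_nat_of_succ_le
    intro k
    exact closure_mono (image_mono (hSmono_k k m))
  have hDlim : Tendsto (μ ∘ D) atTop (𝓝 (μ (⋂ k, D k))) :=
    tendsto_measure_iInter_atTop
      (fun k => isClosed_closure.measurableSet.nullMeasurableSet) hDanti
      ⟨0, measure_ne_top μ _⟩
  have hDk : ∀ k, μ (range F) ≤ μ (D k) + ε := fun k =>
    (hPk k).trans (add_le_add (measure_mono subset_closure) le_rfl)
  have hlim2 : Tendsto (fun k => μ (D k) + ε) atTop (𝓝 (μ (⋂ k, D k) + ε)) :=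
    hDlim.add tendsto_const_nhds
  have hInter : μ (range F) ≤ μ (⋂ k, D k) + ε := ge_of_tendsto' hlim2 hDk
  -- hard inclusion : ⋂ k, D k ⊆ F '' Sinf
  have hinc : (⋂ k, D k) ⊆ F '' Sinf := by
    intro x hx
    have hx' : ∀ k : ℕ, ∃ σ, σ ∈ S k m ∧ dist (F σ) x < 1 / (k + 1) := by
      intro k
      have hxk : x ∈ closure (F '' S k m) := mem_iInter.mp hx k
      rcases Metric.mem_closure_iff.mp hxk (1 / (k+1)) (by positivity) with ⟨y, hy, hxy⟩
      rcases hy with ⟨σ, hσ, rfl⟩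
      exact ⟨σ, hσ, by rwa [dist_comm]⟩
    choose σs hσS hσd using hx'
    set U : Ultrafilter ℕ := Ultrafilter.of atTop with hU
    have hUatTop : ↑U ≤ (atTop : Filter ℕ) := Ultrafilter.of_le _
    have hcoord : ∀ i, ∃ a, a ≤ m i ∧ {k | σs k i = a} ∈ U := by
      intro i
      have h1 : {k | i < k} ∈ U := hUatTop (Ioi_mem_atTop i)
      have h2 : {k | σs k i ≤ m i} ∈ U :=
        Filter.mem_of_superset h1 (fun k hk => hσS k i hk)
      have h4 : (⋃ a ∈ Iic (m i), {k | σs k i = a}) ∈ U :=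
        Filter.mem_of_superset h2 (fun k hk => mem_biUnion hk rfl)
      rcases (Ultrafilter.finite_biUnion_mem_iff (finite_Iic (m i))).mp h4 with ⟨a, ha, hmem⟩
      exact ⟨a, ha, hmem⟩
    choose a ham haU using hcoord
    have hT1 : Tendsto (fun k => σs k) (↑U) (𝓝 a) := by
      rw [tendsto_pi_nhds]
      intro i
      have : (fun k => a i) =ᶠ[↑U] fun k => σs k i := by
        filter_upwards [haU i] with k hk using hk.symm
      exact tendsto_const_nhds.congr' this
    have hT2 : Tendsto (fun k => F (σs k)) (↑U) (𝓝 (F a)) := (Fcont.tendsto a).comp hT1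
    have hT3 : Tendsto (fun k => F (σs k)) atTop (𝓝 x) := by
      rw [tendsto_iff_dist_tendsto_zero]
      refine squeeze_zero (fun k => dist_nonneg) (fun k => (hσd k).le) ?_
      exact tendsto_one_div_add_atTop_nhds_zero_nat
    have hxFa : x = F a := tendsto_nhds_unique (hT3.mono_left hUatTop) hT2
    rw [hxFa]
    exact mem_image_of_mem F (fun i => ham i)
  exact hInter.trans (by gcongr)

theorem analyticSet_nullMeasurableSet {s : Set X} (hs : MeasureTheory.AnalyticSet s)
    (μ : Measure X) [IsFiniteMeasure μ] : NullMeasurableSet s μ := by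
  have hex : ∀ n : ℕ, ∃ K : Set X, K ⊆ s ∧ IsCompact K ∧ μ s ≤ μ K + ((n : ℝ≥0∞) + 1)⁻¹ := by
    intro n
    exact analytic_inner_compact hs μ (by simp)
  choose K hK1 hK2 hK3 using hex
  set B := ⋃ n, K n with hB
  have hBs : B ⊆ s := iUnion_subset hK1
  have hBmeas : MeasurableSet B :=
    MeasurableSet.iUnion fun n => (hK2 n).isClosed.measurableSet
  have hμB : μ s ≤ μ B := by
    refine ENNReal.le_of_forall_pos_le_add fun δ hδ _ => ?_
    obtain ⟨n, hn⟩ := ENNReal.exists_nat_gt (r := (δ : ℝ≥0∞)⁻¹) (by simp [hδ.ne'])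
    refine (hK3 n).trans (add_le_add (measure_mono (subset_iUnion K n)) ?_)
    have h6 : (δ : ℝ≥0∞)⁻¹ ≤ (n : ℝ≥0∞) + 1 := hn.le.trans le_self_add
    calc ((n : ℝ≥0∞) + 1)⁻¹ ≤ ((δ : ℝ≥0∞)⁻¹)⁻¹ := ENNReal.inv_le_inv.mpr h6
      _ = (δ : ℝ≥0∞) := inv_inv _
  have hnull : μ (s \ B) = 0 := by
    have h1 : s \ B ⊆ toMeasurable μ s \ B :=
      diff_subset_diff_left (subset_toMeasurable μ s)
    have h2 : μ (toMeasurable μ s \ B) = 0 := by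
      rw [measure_diff (hBs.trans (subset_toMeasurable μ s)) hBmeas.nullMeasurableSet
        (measure_ne_top μ B), measure_toMeasurable]
      exact tsub_eq_zero_iff_le.mpr hμB
    exact measure_mono_null h1 h2
  have : s = B ∪ (s \ B) := (union_diff_cancel hBs).symm
  rw [this]
  exact hBmeas.nullMeasurableSet.union (NullMeasurableSet.of_null hnull)

end AnalyticNullMeasurable

section Factorization

variable {T 𝒳 : Type*} [MeasurableSpace T] [MeasurableSpace 𝒳]

theorem exists_factor_seq {U : Set (T × 𝒳)} (hU : MeasurableSet U) :
    ∃ (g : 𝒳 → ℕ → ℕ) (V : Set (T × (ℕ → ℕ))), Measurable g ∧ MeasurableSet V ∧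
      U = (fun p : T × 𝒳 => (p.1, g p.2)) ⁻¹' V := by
  have hU' : MeasurableSet[MeasurableSpace.generateFrom
      (Set.image2 (· ×ˢ ·) {s : Set T | MeasurableSet s} {t : Set 𝒳 | MeasurableSet t})] U := by
    rw [generateFrom_prod]; exact hU
  refine MeasurableSpace.generateFrom_induction _
    (fun (W : Set (T × 𝒳)) _ => ∃ (g : 𝒳 → ℕ → ℕ) (V : Set (T × (ℕ → ℕ))),
      Measurable g ∧ MeasurableSet V ∧ W = (fun p : T × 𝒳 => (p.1, g p.2)) ⁻¹' V)
    ?_ ?_ ?_ ?_ U hU'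
  · -- rectangles
    rintro W ⟨s, hs, t, ht, rfl⟩ _
    classical
    refine ⟨fun x _ => if x ∈ t then 1 else 0, s ×ˢ {y : ℕ → ℕ | y 0 = 1}, ?_, ?_, ?_⟩
    · refine measurable_pi_lambda _ fun _ => ?_
      exact Measurable.ite ht measurable_const measurable_const
    · exact hs.prod ((measurable_pi_apply 0) (measurableSet_singleton 1))
    · ext p
      by_cases hp : p.2 ∈ t <;> simp [Set.mem_prod, hp]
  · -- empty
    exact ⟨fun _ _ => 0, ∅, measurable_const, MeasurableSet.empty, by simp⟩
  · -- compl
    rintro W _ ⟨g, V, hg, hV, rfl⟩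
    exact ⟨g, Vᶜ, hg, hV.compl, by simp⟩
  · -- iUnion
    rintro s _ hs
    choose gs Vs hgs hVs hEq using hs
    set gg : 𝒳 → ℕ → ℕ := fun x j => gs (Nat.unpair j).1 x (Nat.unpair j).2 with hgg
    have hggm : Measurable gg := by
      refine measurable_pi_lambda _ fun j => ?_
      exact (measurable_pi_apply _).comp (hgs _)
    set r : ℕ → (ℕ → ℕ) → (ℕ → ℕ) := fun n y j => y (Nat.pair n j) with hr
    have hrm : ∀ n, Measurable (r n) := fun n =>
      measurable_pi_lambda _ fun j => measurable_pi_apply _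
    refine ⟨gg, ⋃ n, (fun p : T × (ℕ → ℕ) => (p.1, r n p.2)) ⁻¹' (Vs n), hggm, ?_, ?_⟩
    · exact MeasurableSet.iUnion fun n =>
        (measurable_fst.prodMk ((hrm n).comp measurable_snd)) (hVs n)
    · have hre : ∀ n x, r n (gg x) = gs n x := by
        intro n x
        funext j
        simp [hr, hgg, Nat.unpair_pair]
      ext p
      simp only [Set.mem_iUnion, Set.mem_preimage, hre]
      constructor
      · rintro ⟨n, hn⟩
        rw [hEq n] at hn
        exact ⟨n, hn⟩
      · rintro ⟨n, hn⟩
        refine ⟨n, ?_⟩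
        rw [hEq n]
        exact hn



theorem exists_factor_seq_family (U : ℕ → Set (T × 𝒳)) (hU : ∀ n, MeasurableSet (U n)) :
    ∃ (g : 𝒳 → ℕ → ℕ) (V : ℕ → Set (T × (ℕ → ℕ))), Measurable g ∧ (∀ n, MeasurableSet (V n)) ∧
      ∀ n, U n = (fun p : T × 𝒳 => (p.1, g p.2)) ⁻¹' (V n) := by
  have h := fun n => exists_factor_seq (hU n)
  choose gs Vs hgs hVs hEq using h
  set gg : 𝒳 → ℕ → ℕ := fun x j => gs (Nat.unpair j).1 x (Nat.unpair j).2 with hgg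
  have hggm : Measurable gg := by
    refine measurable_pi_lambda _ fun j => ?_
    exact (measurable_pi_apply _).comp (hgs _)
  set r : ℕ → (ℕ → ℕ) → (ℕ → ℕ) := fun n y j => y (Nat.pair n j) with hr
  have hrm : ∀ n, Measurable (r n) := fun n =>
    measurable_pi_lambda _ fun j => measurable_pi_apply _
  have hre : ∀ n x, r n (gg x) = gs n x := by
    intro n x; funext j; simp [hr, hgg, Nat.unpair_pair]
  refine ⟨gg, fun n => (fun p : T × (ℕ → ℕ) => (p.1, r n p.2)) ⁻¹' (Vs n), hggm,
    fun n => (measurable_fst.prodMk ((hrm n).comp measurable_snd)) (hVs n), fun n => ?_⟩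
  rw [hEq n]
  ext p
  simp [hre]

end Factorization

section Envelope

variable {Θ 𝒳 : Type*} [MetricSpace Θ] [CompactSpace Θ] [MeasurableSpace Θ] [BorelSpace Θ]
  [MeasurableSpace 𝒳]

/-- A measurable version of the pointwise supremum of `ENNReal.ofReal (φ ϑ x)` over `ϑ` in a
closed set `B`, valid on a measurable set of full measure. -/
theorem exists_envelope (φ : Θ → 𝒳 → ℝ) (hφ : Measurable (Function.uncurry φ))
    (ν : Measure 𝒳) [IsFiniteMeasure ν] (B : Set Θ) (hB : IsClosed B) :
    ∃ (G : 𝒳 → ℝ≥0∞) (E : Set 𝒳), Measurable G ∧ MeasurableSet E ∧ ν Eᶜ = 0 ∧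
      ∀ x ∈ E, G x = ⨆ ϑ ∈ B, ENNReal.ofReal (φ ϑ x) := by
  classical
  set e : ℕ → ℚ := fun n => (Denumerable.eqv ℚ).symm n with he
  set U : ℕ → Set (Θ × 𝒳) := fun n => {p | ((e n : ℚ) : ℝ) < φ p.1 p.2} with hUdef
  have hU : ∀ n, MeasurableSet (U n) := fun n => hφ measurableSet_Ioi
  obtain ⟨g, V, hg, hV, hUV⟩ := exists_factor_seq_family U hU
  set W : ℕ → Set (ℕ → ℕ) := fun n => Prod.snd '' (V n ∩ (B ×ˢ (univ : Set (ℕ → ℕ)))) with hW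
  have hWa : ∀ n, MeasureTheory.AnalyticSet (W n) := fun n =>
    MeasurableSet.analyticSet_image ((hV n).inter (hB.measurableSet.prod MeasurableSet.univ))
      measurable_snd
  haveI : IsFiniteMeasure (ν.map g) := by
    exact Measure.isFiniteMeasure_map ν g
  have hWnull : ∀ n, NullMeasurableSet (W n) (ν.map g) := fun n =>
    analyticSet_nullMeasurableSet (hWa n) (ν.map g)
  have hT := fun n => (hWnull n).exists_measurable_subset_ae_eq
  choose Tn hTsub hTmeas hTae using hT
  set Z : ℕ → Set 𝒳 := fun n => g ⁻¹' (toMeasurable (ν.map g) (W n \ Tn n)) with hZ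
  have hZmeas : ∀ n, MeasurableSet (Z n) := fun n =>
    hg (measurableSet_toMeasurable _ _)
  have hZnull : ∀ n, ν (Z n) = 0 := by
    intro n
    rw [hZ]
    rw [← Measure.map_apply hg (measurableSet_toMeasurable _ _), measure_toMeasurable]
    exact (ae_eq_set.mp (hTae n)).2
  set M : ℕ → Set 𝒳 := fun n => g ⁻¹' (Tn n) with hM
  have hMmeas : ∀ n, MeasurableSet (M n) := fun n => hg (hTmeas n)
  have hMsub : ∀ n, M n ⊆ g ⁻¹' (W n) := fun n => preimage_mono (hTsub n)
  have hdiff : ∀ n, g ⁻¹' (W n) \ M n ⊆ Z n := by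
    intro n x hx
    exact mem_preimage.2 (subset_toMeasurable _ _ ⟨hx.1, hx.2⟩)
  -- pointwise description of g ⁻¹' (W n)
  have hiffW : ∀ n x, x ∈ g ⁻¹' (W n) ↔ ∃ ϑ ∈ B, ((e n : ℚ) : ℝ) < φ ϑ x := by
    intro n x
    constructor
    · rintro ⟨p, ⟨hpV, hpB⟩, hp2⟩
      refine ⟨p.1, hpB.1, ?_⟩
      have : (p.1, x) ∈ U n := by
        rw [hUV n]
        show (p.1, g x) ∈ V n
        rw [← hp2]
        simpa using hpV
      exact this
    · rintro ⟨ϑ, hϑ, hlt⟩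
      have : (ϑ, x) ∈ U n := hlt
      rw [hUV n] at this
      exact ⟨(ϑ, g x), ⟨this, ⟨hϑ, mem_univ _⟩⟩, rfl⟩
  set G : 𝒳 → ℝ≥0∞ := fun x =>
    ⨆ n : ℕ, (M n).indicator (fun _ => ENNReal.ofReal ((e n : ℚ) : ℝ)) x with hG
  have hGmeas : Measurable G :=
    Measurable.iSup fun n => Measurable.indicator measurable_const (hMmeas n)
  refine ⟨G, (⋃ n, Z n)ᶜ, hGmeas, (MeasurableSet.iUnion hZmeas).compl, ?_, ?_⟩
  · rw [compl_compl]
    exact measure_iUnion_null hZnull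
  · intro x hx
    have hxZ : ∀ n, x ∉ Z n := by
      intro n hn
      exact hx (mem_iUnion.2 ⟨n, hn⟩)
    have hiff : ∀ n, x ∈ M n ↔ ∃ ϑ ∈ B, ((e n : ℚ) : ℝ) < φ ϑ x := by
      intro n
      constructor
      · intro hxM
        exact (hiffW n x).1 (hMsub n hxM)
      · intro hex
        have hxW : x ∈ g ⁻¹' (W n) := (hiffW n x).2 hex
        by_contra hxM
        exact hxZ n (hdiff n ⟨hxW, hxM⟩)
    apply le_antisymm
    · refine iSup_le fun n => ?_
      by_cases hxM : x ∈ M n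
      · rw [indicator_of_mem hxM]
        obtain ⟨ϑ, hϑ, hlt⟩ := (hiff n).1 hxM
        exact le_trans (ENNReal.ofReal_le_ofReal hlt.le) (le_iSup₂ (f := fun ϑ _ => ENNReal.ofReal (φ ϑ x)) ϑ hϑ)
      · rw [indicator_of_notMem hxM]
        exact zero_le
    · refine iSup₂_le fun ϑ hϑ => ?_
      refine le_of_forall_lt fun b hb => ?_
      rcases ENNReal.lt_iff_exists_rat_btwn.mp hb with ⟨q, hq0, hbq, hqφ⟩
      have hqφ' : (q : ℝ) < φ ϑ x := by
        have : ENNReal.ofReal (q : ℝ) < ENNReal.ofReal (φ ϑ x) := hqφ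
        exact (ENNReal.ofReal_lt_ofReal_iff_of_nonneg (by exact_mod_cast hq0)).mp this
      set n : ℕ := Denumerable.eqv ℚ q with hn
      have hen : e n = q := by
        simp [he, hn]
      have hxM : x ∈ M n := (hiff n).2 ⟨ϑ, hϑ, by rw [hen]; exact hqφ'⟩
      have : ENNReal.ofReal ((e n : ℚ) : ℝ) ≤ G x := by
        rw [hG]
        refine le_trans ?_ (le_iSup _ n)
        rw [indicator_of_mem hxM]
      calc b < ENNReal.ofReal (q : ℝ) := hbq
        _ = ENNReal.ofReal ((e n : ℚ) : ℝ) := by rw [hen]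
        _ ≤ G x := this

end Envelope
section SLLN

open Finset in
theorem slln_comp {𝒳 Ω : Type*} [MeasurableSpace 𝒳] [MeasurableSpace Ω]
    (P : Measure Ω) (ν : Measure 𝒳)
    (X : ℕ → Ω → 𝒳) (hX : ∀ i, Measurable (X i))
    (hiid : iIndepFun X P)
    (hlaw : ∀ i, Measure.map (X i) P = ν)
    (h : 𝒳 → ℝ) (hm : Measurable h) (hint : Integrable h ν) :
    ∀ᵐ ω ∂P, Tendsto (fun n => (∑ i ∈ Finset.range n, h (X i ω)) / (n : ℝ))
      atTop (𝓝 (∫ x, h x ∂ν)) := by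
  have hint0 : Integrable (fun ω => h (X 0 ω)) P := by
    have : Integrable h (Measure.map (X 0) P) := by rwa [hlaw 0]
    exact (integrable_map_measure hm.aestronglyMeasurable (hX 0).aemeasurable).mp this
  have hindep : Pairwise (Function.onFun (IndepFun · · P) fun i ω => h (X i ω)) := by
    intro i j hij
    exact (hiid.indepFun hij).comp hm hm
  have hident : ∀ i, IdentDistrib (fun ω => h (X i ω)) (fun ω => h (X 0 ω)) P P := by
    intro i
    have hXid : IdentDistrib (X i) (X 0) P P :=
      ⟨(hX i).aemeasurable, (hX 0).aemeasurable, by rw [hlaw i, hlaw 0]⟩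
    exact hXid.comp hm
  have hlim := strong_law_ae_real _ hint0 hindep hident
  have heq : ∫ ω, h (X 0 ω) ∂P = ∫ x, h x ∂ν := by
    rw [← hlaw 0, integral_map (hX 0).aemeasurable hm.aestronglyMeasurable]
  rwa [heq] at hlim

end SLLN


/-- Strong consistency of minimum bridge divergence estimators:
under compactness of `Θ`, the dominatedness condition (C2), a.e. continuity in
`θ` (C3), continuity and finiteness of `θ ↦ ∫ f_θ^{1+α}`, and uniqueness of the
population minimizer `θ*`, any sequence of measurable minimizers `θ̂_n` of the
sample bridge objective converges to `θ*` almost surely. -/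
theorem minimum_bridge_divergence_estimator_consistency
    {Θ 𝒳 Ω : Type*} [MetricSpace Θ] [CompactSpace Θ]
    [MeasurableSpace Θ] [BorelSpace Θ]
    [MeasurableSpace 𝒳] [MeasurableSpace Ω]
    (μ : Measure 𝒳) [SigmaFinite μ] (P : Measure Ω) [IsProbabilityMeasure P]
    (f : Θ → 𝒳 → ℝ) (hf_nonneg : ∀ θ x, 0 ≤ f θ x)
    (hf_meas : Measurable (Function.uncurry f))
    (hf_dens : ∀ θ, ∫ x, f θ x ∂μ = 1)
    (α lam : ℝ) (hα0 : 0 < α) (hα1 : α ≤ 1) (hlam0 : 0 < lam) (hlam1 : lam < 1)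
    (g : 𝒳 → ℝ) (hg_nonneg : ∀ x, 0 ≤ g x) (hg_meas : Measurable g)
    (hg_dens : ∫ x, g x ∂μ = 1)
    (X : ℕ → Ω → 𝒳) (hX_meas : ∀ i, Measurable (X i))
    (hiid : iIndepFun X P)
    (hlaw : ∀ i, Measure.map (X i) P = μ.withDensity (fun x => ENNReal.ofReal (g x)))
    -- (C2): density-power dominatedness
    (K : 𝒳 → ℝ) (hK_bound : ∀ θ x, f θ x ^ α ≤ K x)
    (hK_int : Integrable (fun x => K x * g x) μ)
    -- (C3): a.e. continuity in θ
    (hcont : ∀ θ : Θ, ∀ᵐ x ∂μ, ContinuousAt (fun θ' => f θ' x) θ)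
    (ht1_fin : ∀ θ, Integrable (fun x => f θ x ^ (1 + α)) μ)
    (ht1_cont : Continuous (fun θ => ∫ x, f θ x ^ (1 + α) ∂μ))
    -- θ* is the unique minimizer of the population bridge objective
    (θstar : Θ)
    (hunique : ∀ θ : Θ, θ ≠ θstar →
      (1 / (1 - lam)) * Real.log (lam + (1 - lam) * ∫ x, f θstar x ^ (1 + α) ∂μ)
          - ((1 + α) / (α * (1 - lam))) *
              Real.log (lam + (1 - lam) * ∫ x, g x * f θstar x ^ α ∂μ)
        < (1 / (1 - lam)) * Real.log (lam + (1 - lam) * ∫ x, f θ x ^ (1 + α) ∂μ)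
            - ((1 + α) / (α * (1 - lam))) *
                Real.log (lam + (1 - lam) * ∫ x, g x * f θ x ^ α ∂μ))
    -- θ̂_n are measurable minimizers of the sample bridge objective
    (θhat : ℕ → Ω → Θ) (hθhat_meas : ∀ n, Measurable (θhat n))
    (hθhat_min : ∀ n : ℕ, 1 ≤ n → ∀ ω : Ω, ∀ θ : Θ,
      (1 / (1 - lam)) * Real.log (lam + (1 - lam) * ∫ x, f (θhat n ω) x ^ (1 + α) ∂μ)
          - ((1 + α) / (α * (1 - lam))) *
              Real.log (lam + (1 - lam) / (n : ℝ) *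
                ∑ i ∈ Finset.range n, f (θhat n ω) (X i ω) ^ α)
        ≤ (1 / (1 - lam)) * Real.log (lam + (1 - lam) * ∫ x, f θ x ^ (1 + α) ∂μ)
            - ((1 + α) / (α * (1 - lam))) *
                Real.log (lam + (1 - lam) / (n : ℝ) *
                  ∑ i ∈ Finset.range n, f θ (X i ω) ^ α)) :
    ∀ᵐ ω ∂P, Tendsto (fun n => θhat n ω) atTop (𝓝 θstar) := by
  classical
  have hlb0 : 0 < 1 - lam := by linarith
  set c : ℝ := (1 + α) / (α * (1 - lam)) with hc
  have hc0 : 0 < c := by rw [hc]; positivity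
  set ν : Measure 𝒳 := μ.withDensity (fun x => ENNReal.ofReal (g x)) with hν
  have hνμ : ν ≪ μ := withDensity_absolutelyContinuous μ _
  have hgint : Integrable g μ := by
    by_contra h
    rw [integral_undef h] at hg_dens; norm_num at hg_dens
  haveI hνprob : IsProbabilityMeasure ν := by
    constructor
    rw [hν, withDensity_apply _ MeasurableSet.univ, setLIntegral_univ,
      ← ofReal_integral_eq_lintegral_ofReal hgint (Eventually.of_forall hg_nonneg), hg_dens,
      ENNReal.ofReal_one]
  have hfm : ∀ ϑ : Θ, Measurable (f ϑ) := fun ϑ => hf_meas.comp measurable_prodMk_left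
  have hφm : ∀ ϑ : Θ, Measurable (fun x => f ϑ x ^ α) := fun ϑ =>
    (Real.continuous_rpow_const hα0.le).measurable.comp (hfm ϑ)
  have hφum : Measurable (Function.uncurry fun ϑ (x : 𝒳) => f ϑ x ^ α) :=
    (Real.continuous_rpow_const hα0.le).measurable.comp hf_meas
  have hφ0 : ∀ (ϑ : Θ) (x : 𝒳), 0 ≤ f ϑ x ^ α := fun ϑ x => Real.rpow_nonneg (hf_nonneg ϑ x) α
  have hK0 : ∀ x, 0 ≤ K x := fun x => (hφ0 θstar x).trans (hK_bound θstar x)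
  -- a measurable a.e.-version J of K (K itself need not be measurable)
  obtain ⟨H, hHsm, hHae⟩ : ∃ H, StronglyMeasurable H ∧ (fun x => K x * g x) =ᵐ[μ] H :=
    ⟨hK_int.aestronglyMeasurable.mk _, hK_int.aestronglyMeasurable.stronglyMeasurable_mk,
      hK_int.aestronglyMeasurable.ae_eq_mk⟩
  have hHm : Measurable H := hHsm.measurable
  set J : 𝒳 → ℝ := fun x => H x / g x with hJdef
  have hJm : Measurable J := hHm.div hg_meas
  have hg_ne : ∀ᵐ x ∂ν, g x ≠ 0 := by
    have hA : MeasurableSet {x : 𝒳 | g x = 0} := hg_meas (measurableSet_singleton 0)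
    have hset : ν {x | g x = 0} = 0 := by
      rw [hν, withDensity_apply _ hA]
      have hz : ∀ᵐ x ∂(μ.restrict {x | g x = 0}), ENNReal.ofReal (g x) = 0 := by
        filter_upwards [ae_restrict_mem hA] with x hx
        have hx0 : g x = 0 := hx
        simp [hx0]
      rw [lintegral_congr_ae hz, lintegral_zero]
    rw [ae_iff]
    simpa only [not_not] using hset
  have hHaeν : (fun x => K x * g x) =ᵐ[ν] H := hνμ.ae_le hHae
  have hJK : J =ᵐ[ν] K := by
    filter_upwards [hg_ne, hHaeν] with x h1 h2
    simp only [hJdef]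
    rw [← h2]
    field_simp
  have hJg : (fun x => J x * g x) =ᵐ[μ] (fun x => K x * g x) := by
    filter_upwards [hHae] with x hx
    by_cases hgx : g x = 0
    · simp [hJdef, hgx]
    · simp only [hJdef]
      rw [div_mul_cancel₀ _ hgx, ← hx]
  have hgofm : Measurable fun x => ENNReal.ofReal (g x) := ENNReal.measurable_ofReal.comp hg_meas
  have hJint : Integrable J ν := by
    rw [hν, integrable_withDensity_iff hgofm
      (Eventually.of_forall fun x => ENNReal.ofReal_lt_top)]
    have hre : (fun x => J x * (ENNReal.ofReal (g x)).toReal) = fun x => J x * g x := by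
      funext x; rw [ENNReal.toReal_ofReal (hg_nonneg x)]
    rw [hre]
    exact hK_int.congr hJg.symm
  have hJ0 : ∀ᵐ x ∂ν, 0 ≤ J x := hJK.mono fun x hx => hx ▸ hK0 x
  have hφJ : ∀ ϑ : Θ, ∀ᵐ x ∂ν, f ϑ x ^ α ≤ J x := fun ϑ =>
    hJK.mono fun x hx => by rw [hx]; exact hK_bound ϑ x
  -- population quantity ℓ
  set ell : Θ → ℝ := fun ϑ => ∫ x, f ϑ x ^ α ∂ν with hell
  have hell_eq : ∀ ϑ, ∫ x, g x * f ϑ x ^ α ∂μ = ell ϑ := by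
    intro ϑ
    have hnn : Measurable fun x => Real.toNNReal (g x) := measurable_real_toNNReal.comp hg_meas
    have hid : ν = μ.withDensity (fun x => ((Real.toNNReal (g x) : ℝ≥0) : ℝ≥0∞)) := rfl
    simp only [hell]
    rw [hid, integral_withDensity_eq_integral_smul hnn]
    congr 1
    funext x
    rw [NNReal.smul_def, Real.coe_toNNReal _ (hg_nonneg x), smul_eq_mul]
  have hφint : ∀ ϑ : Θ, Integrable (fun x => f ϑ x ^ α) ν := by
    intro ϑ
    refine hJint.mono (hφm ϑ).aestronglyMeasurable ?_
    filter_upwards [hφJ ϑ, hJ0] with x h1 h2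
    rw [Real.norm_eq_abs, Real.norm_eq_abs, abs_of_nonneg (hφ0 ϑ x), abs_of_nonneg h2]
    exact h1
  have hell0 : ∀ ϑ, 0 ≤ ell ϑ := fun ϑ => integral_nonneg fun x => hφ0 ϑ x
  have hpos : ∀ t : ℝ, 0 ≤ t → 0 < lam + (1 - lam) * t := fun t ht => by nlinarith
  -- SLLN
  have hSLLN : ∀ h : 𝒳 → ℝ, Measurable h → Integrable h ν →
      ∀ᵐ ω ∂P, Tendsto (fun n => (∑ i ∈ Finset.range n, h (X i ω)) / (n : ℝ))
        atTop (𝓝 (∫ x, h x ∂ν)) := fun h hm hint =>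
    slln_comp P ν X hX_meas hiid (fun i => by rw [hlaw i]) h hm hint
  -- transfer of a.e. statements to the samples
  have hXae : ∀ (i : ℕ) (S : Set 𝒳), MeasurableSet S → (∀ᵐ x ∂ν, x ∈ S) →
      ∀ᵐ ω ∂P, X i ω ∈ S := by
    intro i S hS hae
    have h1 : ∀ᵐ x ∂(Measure.map (X i) P), x ∈ S := by rwa [hlaw i]
    exact (ae_map_iff (hX_meas i).aemeasurable hS).mp h1
  -- envelopes
  have hENV := fun (θ : Θ) (m : ℕ) =>
    exists_envelope (fun ϑ (x : 𝒳) => f ϑ x ^ α) hφum ν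
      (Metric.closedBall θ (1 / (m + 1) : ℝ)) Metric.isClosed_closedBall
  -- the key uniform upper bound over small balls
  have hKey : ∀ (θ : Θ) (η : ℝ), 0 < η → ∃ δ : ℝ, 0 < δ ∧ ∀ᵐ ω ∂P, ∀ᶠ n : ℕ in atTop,
      ∀ ϑ ∈ Metric.closedBall θ δ,
        (∑ i ∈ Finset.range n, f ϑ (X i ω) ^ α) / (n : ℝ) ≤ ell θ + η := by
    intro θ η hη
    choose G E hGmeas hEmeas hEnull hGeq using fun m : ℕ => hENV θ m
    set E' : ℕ → Set 𝒳 := fun m => E m ∩ {x | G m x ≤ ENNReal.ofReal (J x)} with hE'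
    have hE'meas : ∀ m, MeasurableSet (E' m) := fun m =>
      (hEmeas m).inter (measurableSet_le (hGmeas m) (ENNReal.measurable_ofReal.comp hJm))
    have hE'ae : ∀ m, ∀ᵐ x ∂ν, x ∈ E' m := by
      intro m
      have h1 : ∀ᵐ x ∂ν, x ∈ E m := by
        rw [ae_iff]; exact hEnull m
      filter_upwards [h1, hJK] with x hx hJKx
      refine ⟨hx, ?_⟩
      rw [mem_setOf_eq, hGeq m x hx]
      refine iSup₂_le fun ϑ _ => ?_
      rw [hJKx]
      exact ENNReal.ofReal_le_ofReal (hK_bound ϑ x)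
    have hGne_top : ∀ m, ∀ x ∈ E' m, G m x ≠ ⊤ := fun m x hx =>
      (lt_of_le_of_lt hx.2 ENNReal.ofReal_lt_top).ne
    have hub : ∀ m, ∀ x ∈ E' m, ∀ ϑ ∈ Metric.closedBall θ (1 / (m + 1) : ℝ),
        f ϑ x ^ α ≤ (G m x).toReal := by
      intro m x hx ϑ hϑ
      have h1 : ENNReal.ofReal (f ϑ x ^ α) ≤ G m x := by
        rw [hGeq m x hx.1]
        exact le_iSup₂ (f := fun ϑ _ => ENNReal.ofReal (f ϑ x ^ α)) ϑ hϑ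
      have h2 := ENNReal.toReal_mono (hGne_top m x hx) h1
      rwa [ENNReal.toReal_ofReal (hφ0 ϑ x)] at h2
    have hGle : ∀ m, ∀ᵐ x ∂ν, ‖(G m x).toReal‖ ≤ ‖J x‖ := by
      intro m
      filter_upwards [hE'ae m, hJ0] with x hx hJx
      rw [Real.norm_eq_abs, Real.norm_eq_abs, abs_of_nonneg ENNReal.toReal_nonneg,
        abs_of_nonneg hJx]
      calc (G m x).toReal ≤ (ENNReal.ofReal (J x)).toReal :=
            ENNReal.toReal_mono ENNReal.ofReal_ne_top hx.2
        _ = J x := ENNReal.toReal_ofReal hJx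
    have hGint : ∀ m, Integrable (fun x => (G m x).toReal) ν := fun m =>
      hJint.mono (ENNReal.measurable_toReal.comp (hGmeas m)).aestronglyMeasurable (hGle m)
    have hGconv : ∀ᵐ x ∂ν, Tendsto (fun m => (G m x).toReal) atTop (𝓝 (f θ x ^ α)) := by
      have hcν : ∀ᵐ x ∂ν, ContinuousAt (fun ϑ => f ϑ x) θ := (hcont θ).filter_mono hνμ.ae_le
      filter_upwards [hcν, ae_all_iff.2 hE'ae] with x hxc hxE
      have hφc : ContinuousAt (fun ϑ => f ϑ x ^ α) θ := hxc.rpow_const (Or.inr hα0.le)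
      rw [Metric.tendsto_atTop]
      intro ε hε
      obtain ⟨δ', hδ'pos, hδ'⟩ := Metric.continuousAt_iff.mp hφc (ε / 2) (half_pos hε)
      obtain ⟨N, hN⟩ := eventually_atTop.mp
        (tendsto_one_div_add_atTop_nhds_zero_nat.eventually (gt_mem_nhds hδ'pos))
      refine ⟨N, fun m hm => ?_⟩
      have hrad : (1 / (m + 1) : ℝ) < δ' := hN m hm
      have hlow : ENNReal.ofReal (f θ x ^ α) ≤ G m x := by
        rw [hGeq m x (hxE m).1]
        exact le_iSup₂ (f := fun ϑ _ => ENNReal.ofReal (f ϑ x ^ α)) θ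
          (Metric.mem_closedBall_self (by positivity))
      have hupp : G m x ≤ ENNReal.ofReal (f θ x ^ α + ε / 2) := by
        rw [hGeq m x (hxE m).1]
        refine iSup₂_le fun ϑ hϑ => ?_
        refine ENNReal.ofReal_le_ofReal ?_
        have hd : dist ϑ θ < δ' := lt_of_le_of_lt (Metric.mem_closedBall.mp hϑ) hrad
        have := hδ' hd
        rw [Real.dist_eq] at this
        have := (abs_lt.mp this).2
        linarith
      have hlowR : f θ x ^ α ≤ (G m x).toReal := by
        have h2 := ENNReal.toReal_mono (hGne_top m x (hxE m)) hlow
        rwa [ENNReal.toReal_ofReal (hφ0 θ x)] at h2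
      have huppR : (G m x).toReal ≤ f θ x ^ α + ε / 2 := by
        have h2 := ENNReal.toReal_mono ENNReal.ofReal_ne_top hupp
        rwa [ENNReal.toReal_ofReal (add_nonneg (hφ0 θ x) (by linarith))] at h2
      rw [Real.dist_eq, abs_of_nonneg (by linarith)]
      linarith
    have hγ : Tendsto (fun m => ∫ x, (G m x).toReal ∂ν) atTop (𝓝 (ell θ)) := by
      simp only [hell]
      exact tendsto_integral_of_dominated_convergence (fun x => ‖J x‖)
        (fun m => (ENNReal.measurable_toReal.comp (hGmeas m)).aestronglyMeasurable)
        hJint.norm hGle hGconv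
    obtain ⟨m, hm⟩ : ∃ m, ∫ x, (G m x).toReal ∂ν < ell θ + η / 2 :=
      (hγ.eventually (gt_mem_nhds (by linarith))).exists
    refine ⟨1 / (m + 1), by positivity, ?_⟩
    filter_upwards [hSLLN (fun x => (G m x).toReal)
      (ENNReal.measurable_toReal.comp (hGmeas m)) (hGint m),
      ae_all_iff.2 fun i => hXae i (E' m) (hE'meas m) (hE'ae m)] with ω hω1 hω2
    have hev1 : ∀ᶠ n : ℕ in atTop,
        (∑ i ∈ Finset.range n, (G m (X i ω)).toReal) / (n : ℝ) < ell θ + η :=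
      hω1.eventually (gt_mem_nhds (by linarith))
    filter_upwards [hev1, eventually_ge_atTop 1] with n hn1 hn2
    intro ϑ hϑ
    have hsum : (∑ i ∈ Finset.range n, f ϑ (X i ω) ^ α)
        ≤ ∑ i ∈ Finset.range n, (G m (X i ω)).toReal :=
      Finset.sum_le_sum fun i _ => hub m _ (hω2 i) ϑ hϑ
    have hnpos : (0 : ℝ) < (n : ℝ) := by exact_mod_cast hn2
    calc (∑ i ∈ Finset.range n, f ϑ (X i ω) ^ α) / (n : ℝ)
        ≤ (∑ i ∈ Finset.range n, (G m (X i ω)).toReal) / (n : ℝ) := by gcongr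
      _ ≤ ell θ + η := hn1.le
  -- the continuous parts of the objective
  set A : Θ → ℝ := fun ϑ =>
    (1 / (1 - lam)) * Real.log (lam + (1 - lam) * ∫ x, f ϑ x ^ (1 + α) ∂μ) with hA
  have hT0 : ∀ ϑ : Θ, 0 ≤ ∫ x, f ϑ x ^ (1 + α) ∂μ := fun ϑ =>
    integral_nonneg fun x => Real.rpow_nonneg (hf_nonneg ϑ x) _
  have hAcont : Continuous A := by
    rw [hA]
    exact continuous_const.mul ((continuous_const.add (continuous_const.mul ht1_cont)).log
      fun ϑ => (hpos _ (hT0 ϑ)).ne')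
  set ρ : Θ → ℝ := fun ϑ => A ϑ - c * Real.log (lam + (1 - lam) * ell ϑ) with hρ
  have hρlt : ∀ θ : Θ, θ ≠ θstar → ρ θstar < ρ θ := by
    intro θ hθ
    have h2 := hunique θ hθ
    rw [hell_eq θ, hell_eq θstar] at h2
    simp only [hρ, hA]
    exact h2
  have hmin : ∀ n : ℕ, 1 ≤ n → ∀ (ω : Ω) (θ : Θ),
      A (θhat n ω) - c * Real.log (lam + (1 - lam) *
        ((∑ i ∈ Finset.range n, f (θhat n ω) (X i ω) ^ α) / (n : ℝ)))
      ≤ A θ - c * Real.log (lam + (1 - lam) *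
        ((∑ i ∈ Finset.range n, f θ (X i ω) ^ α) / (n : ℝ))) := by
    intro n hn ω θ
    have h := hθhat_min n hn ω θ
    have hr : ∀ s : ℝ, lam + (1 - lam) / (n : ℝ) * s = lam + (1 - lam) * (s / (n : ℝ)) := by
      intro s; ring
    rw [hr, hr] at h
    simp only [hA]
    exact h
  have hsum0 : ∀ (n : ℕ) (ϑ : Θ) (ω : Ω),
      0 ≤ (∑ i ∈ Finset.range n, f ϑ (X i ω) ^ α) / (n : ℝ) := fun n ϑ ω =>
    div_nonneg (Finset.sum_nonneg fun i _ => hφ0 ϑ _) (Nat.cast_nonneg n)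
  have hMstar : ∀ᵐ ω ∂P, Tendsto (fun n : ℕ => A θstar - c * Real.log (lam + (1 - lam) *
      ((∑ i ∈ Finset.range n, f θstar (X i ω) ^ α) / (n : ℝ)))) atTop (𝓝 (ρ θstar)) := by
    filter_upwards [hSLLN (fun x => f θstar x ^ α) (hφm θstar) (hφint θstar)] with ω hω
    have h1 : (lam + (1 - lam) * ell θstar) ≠ 0 := (hpos _ (hell0 θstar)).ne'
    have hcA : ContinuousAt (fun t : ℝ => A θstar - c * Real.log (lam + (1 - lam) * t))
        (ell θstar) := by
      refine continuousAt_const.sub (continuousAt_const.mul ?_)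
      have hlin : Continuous (fun t : ℝ => lam + (1 - lam) * t) :=
        continuous_const.add (continuous_const.mul continuous_id)
      have h6 : ContinuousAt (Real.log ∘ fun t : ℝ => lam + (1 - lam) * t) (ell θstar) :=
        ContinuousAt.comp (Real.continuousAt_log h1) hlin.continuousAt
      exact h6
    have := hcA.tendsto.comp hω
    simpa only [hρ, Function.comp_def] using this
  -- main ε-statement
  have hmain : ∀ ε : ℝ, 0 < ε → ∀ᵐ ω ∂P, ∀ᶠ n : ℕ in atTop, dist (θhat n ω) θstar < ε := by
    intro ε hε
    by_cases hF : ∀ ϑ : Θ, dist ϑ θstar < ε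
    · exact ae_of_all _ fun ω => Eventually.of_forall fun n => hF _
    push_neg at hF
    obtain ⟨ϑ₀, hϑ₀⟩ := hF
    set F : Set Θ := {ϑ | ε ≤ dist ϑ θstar} with hFdef
    have hϑ₀F : ϑ₀ ∈ F := hϑ₀
    have hFc : IsClosed F := isClosed_le continuous_const (continuous_id.dist continuous_const)
    have hFcomp : IsCompact F := hFc.isCompact
    have hθne : ∀ θ ∈ F, θ ≠ θstar := by
      intro θ hθ heq
      rw [hFdef, mem_setOf_eq, heq, dist_self] at hθ
      linarith
    set β : Θ → ℝ := fun θ => (ρ θ - ρ θstar) / 2 with hβ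
    have hβpos : ∀ θ ∈ F, 0 < β θ := by
      intro θ hθ
      have h5 := hρlt θ (hθne θ hθ)
      simp only [hβ]
      exact div_pos (sub_pos.mpr h5) two_pos
    have hcover : ∀ θ ∈ F, ∃ δ : ℝ, 0 < δ ∧ ∀ᵐ ω ∂P, ∀ᶠ n : ℕ in atTop,
        ∀ ϑ ∈ Metric.ball θ δ, ρ θstar + β θ ≤
          A ϑ - c * Real.log (lam + (1 - lam) *
            ((∑ i ∈ Finset.range n, f ϑ (X i ω) ^ α) / (n : ℝ))) := by
      intro θ hθF
      have hβθ := hβpos θ hθF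
      have h1 : (lam + (1 - lam) * ell θ) ≠ 0 := (hpos _ (hell0 θ)).ne'
      have hlogc : ContinuousAt (fun t : ℝ => c * Real.log (lam + (1 - lam) * t)) (ell θ) := by
        refine continuousAt_const.mul ?_
        have hlin : Continuous (fun t : ℝ => lam + (1 - lam) * t) :=
          continuous_const.add (continuous_const.mul continuous_id)
        have h6 : ContinuousAt (Real.log ∘ fun t : ℝ => lam + (1 - lam) * t) (ell θ) :=
          ContinuousAt.comp (Real.continuousAt_log h1) hlin.continuousAt
        exact h6
      obtain ⟨η, hη, hηbound⟩ : ∃ η : ℝ, 0 < η ∧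
          c * Real.log (lam + (1 - lam) * (ell θ + η)) <
          c * Real.log (lam + (1 - lam) * ell θ) + β θ / 2 := by
        have h2 : ∀ᶠ t in 𝓝 (ell θ), c * Real.log (lam + (1 - lam) * t) <
            c * Real.log (lam + (1 - lam) * ell θ) + β θ / 2 :=
          hlogc.tendsto.eventually (gt_mem_nhds (by linarith))
        obtain ⟨δ₀, hδ₀, hδ₀p⟩ := Metric.eventually_nhds_iff.mp h2
        refine ⟨δ₀ / 2, by linarith, hδ₀p ?_⟩
        rw [Real.dist_eq]
        rw [abs_of_nonneg (by linarith)]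
        · linarith
      obtain ⟨δA, hδA, hA2⟩ : ∃ δA : ℝ, 0 < δA ∧ ∀ ϑ, dist ϑ θ < δA → A θ - β θ / 2 < A ϑ := by
        have hAc := hAcont.continuousAt (x := θ)
        rw [Metric.continuousAt_iff] at hAc
        obtain ⟨δA, h1', h2'⟩ := hAc (β θ / 2) (by linarith)
        refine ⟨δA, h1', fun ϑ hd => ?_⟩
        have h3 := h2' hd
        rw [Real.dist_eq] at h3
        have := (abs_lt.mp h3).1
        linarith
      obtain ⟨δK, hδK, hKae⟩ := hKey θ η hη
      refine ⟨min δA δK, lt_min hδA hδK, ?_⟩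
      filter_upwards [hKae] with ω hω
      filter_upwards [hω] with n hn
      intro ϑ hϑ
      have hϑA : dist ϑ θ < δA := lt_of_lt_of_le (Metric.mem_ball.mp hϑ) (min_le_left _ _)
      have hϑK : ϑ ∈ Metric.closedBall θ δK :=
        Metric.mem_closedBall.mpr (le_of_lt (lt_of_lt_of_le (Metric.mem_ball.mp hϑ)
          (min_le_right _ _)))
      have hLn := hn ϑ hϑK
      have h2 : c * Real.log (lam + (1 - lam) *
          ((∑ i ∈ Finset.range n, f ϑ (X i ω) ^ α) / (n : ℝ))) ≤
          c * Real.log (lam + (1 - lam) * (ell θ + η)) := by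
        refine mul_le_mul_of_nonneg_left ?_ hc0.le
        refine Real.log_le_log (hpos _ (hsum0 n ϑ ω)) ?_
        have := mul_le_mul_of_nonneg_left hLn hlb0.le
        linarith
      have h3 := hA2 ϑ hϑA
      have h4 : ρ θstar + β θ = A θ - c * Real.log (lam + (1 - lam) * ell θ) - β θ := by
        simp only [hρ, hβ]; ring
      rw [h4]
      linarith
    choose! δF hδFpos hδFae using hcover
    have hFsub : F ⊆ ⋃ θ ∈ F, Metric.ball θ (δF θ) := fun θ hθ =>
      mem_biUnion hθ (Metric.mem_ball_self (hδFpos θ hθ))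
    obtain ⟨t, htsub, htfin, htcov⟩ :=
      hFcomp.elim_finite_subcover_image (fun θ _ => Metric.isOpen_ball) hFsub
    set tf : Finset Θ := htfin.toFinset with htf
    have htfmem : ∀ {θ : Θ}, θ ∈ tf ↔ θ ∈ t := fun {θ} => htfin.mem_toFinset
    have htfne : tf.Nonempty := by
      have h0 := htcov hϑ₀F
      rw [mem_iUnion₂] at h0
      obtain ⟨θ₁, hθ₁, _⟩ := h0
      exact ⟨θ₁, htfmem.2 hθ₁⟩
    set βmin : ℝ := tf.inf' htfne β with hβmin
    have hβminpos : 0 < βmin := by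
      rw [hβmin, Finset.lt_inf'_iff]
      exact fun θ hθ => hβpos θ (htsub (htfmem.1 hθ))
    have hAEcov : ∀ᵐ ω ∂P, ∀ i : {θ // θ ∈ tf}, ∀ᶠ n : ℕ in atTop,
        ∀ ϑ ∈ Metric.ball i.1 (δF i.1), ρ θstar + β i.1 ≤
          A ϑ - c * Real.log (lam + (1 - lam) *
            ((∑ i ∈ Finset.range n, f ϑ (X i ω) ^ α) / (n : ℝ))) :=
      ae_all_iff.2 fun i => hδFae i.1 (htsub (htfmem.1 i.2))
    filter_upwards [hAEcov, hMstar] with ω hω1 hω2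
    have hevA : ∀ᶠ n : ℕ in atTop, ∀ i : {θ // θ ∈ tf},
        ∀ ϑ ∈ Metric.ball i.1 (δF i.1), ρ θstar + β i.1 ≤
          A ϑ - c * Real.log (lam + (1 - lam) *
            ((∑ i ∈ Finset.range n, f ϑ (X i ω) ^ α) / (n : ℝ))) :=
      eventually_all.2 hω1
    have hevB : ∀ᶠ n : ℕ in atTop, A θstar - c * Real.log (lam + (1 - lam) *
        ((∑ i ∈ Finset.range n, f θstar (X i ω) ^ α) / (n : ℝ))) < ρ θstar + βmin / 2 :=
      hω2.eventually (gt_mem_nhds (by linarith))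
    filter_upwards [hevA, hevB, eventually_ge_atTop 1] with n h1 h2 h3
    by_contra hcon
    push_neg at hcon
    have hmem : θhat n ω ∈ F := hcon
    have hc2 := htcov hmem
    rw [mem_iUnion₂] at hc2
    obtain ⟨θj, hθjt, hθjball⟩ := hc2
    have hθjtf : θj ∈ tf := htfmem.2 hθjt
    have hlow := h1 ⟨θj, hθjtf⟩ _ hθjball
    have hupp := hmin n h3 ω θstar
    have hβj : βmin ≤ β θj := Finset.inf'_le _ hθjtf
    have hβjpos : 0 < β θj := hβpos θj (htsub hθjt)
    linarith
  -- conclusion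
  have hall := ae_all_iff.2 fun k : ℕ => hmain (1 / ((k : ℝ) + 1)) (by positivity)
  filter_upwards [hall] with ω hω
  rw [Metric.tendsto_atTop]
  intro ε hε
  obtain ⟨k, hk⟩ := exists_nat_one_div_lt hε
  obtain ⟨N, hN⟩ := eventually_atTop.mp (hω k)
  exact ⟨N, fun n hn => lt_trans (hN n hn) hk⟩
end
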